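/- arXiv:1709.03462 — 15 statements merged into one kernel-verified Lean document; each statement's English description precedes it below -/
import Mathlib

section
/- Let N ≥ 2, 𝒩 = {1,...,N}, and let (y^n) be a sequence in ℝ^𝒩 with ‖y^n‖₁ → ∞ as n → ∞, where ‖x‖₁ = Σ_{i∈𝒩} |x_i|. Then there exist a nonempty subset I ⊆ 𝒩, a subsequence (y^{n_k}), signs ε ∈ {−1,+1}^I, and μ ∈ ℝ^{𝒩∖I} such that for every x ∈ ℝ^𝒩, the values ‖x − y^{n_k}‖₁ − ‖y^{n_k}‖₁ converge as k → ∞ to h(x) = Σ_{i∈I} ε_i x_i + Σ_{i∈𝒩∖I} (|x_i − μ_i| − |μ_i|). -/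
open Filter Topology Real Set

private lemma aux_tendsto_atTop_of_arctan (u : ℕ → ℝ)
    (h : Tendsto (fun n => Real.arctan (u n)) atTop (𝓝 (π / 2))) : Tendsto u atTop atTop := by
  rw [tendsto_atTop]
  intro b
  have hb : Real.arctan b < π / 2 := Real.arctan_lt_pi_div_two b
  filter_upwards [h.eventually (eventually_gt_nhds hb)] with n hn
  exact (Real.arctan_strictMono.lt_iff_lt.mp hn).le

private lemma aux_tendsto_atBot_of_arctan (u : ℕ → ℝ)
    (h : Tendsto (fun n => Real.arctan (u n)) atTop (𝓝 (-(π / 2)))) : Tendsto u atTop atBot := by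
  rw [tendsto_atBot]
  intro b
  have hb : -(π / 2) < Real.arctan b := Real.neg_pi_div_two_lt_arctan b
  filter_upwards [h.eventually (eventually_lt_nhds hb)] with n hn
  exact (Real.arctan_strictMono.lt_iff_lt.mp hn).le

private lemma aux_tendsto_of_arctan (u : ℕ → ℝ) (c : ℝ) (hc : c ∈ Ioo (-(π / 2)) (π / 2))
    (h : Tendsto (fun n => Real.arctan (u n)) atTop (𝓝 c)) :
    Tendsto u atTop (𝓝 (Real.tan c)) := by
  have hcont : ContinuousAt Real.tan c :=
    Real.continuousAt_tan.2 (Real.cos_pos_of_mem_Ioo hc).ne'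
  exact Filter.Tendsto.congr (fun n => Real.tan_arctan (u n)) (hcont.tendsto.comp h)

/-- Lemma 3.1 of the paper, for `ℓ¹(𝒩, ℝ)`. -/
theorem l1_horofunction_subsequence (N : ℕ) (hN : 2 ≤ N) (y : ℕ → Fin N → ℝ)
    (hy : Tendsto (fun n => ∑ i, |y n i|) atTop atTop) :
    ∃ I : Finset (Fin N), I.Nonempty ∧
    ∃ φ : ℕ → ℕ, StrictMono φ ∧
    ∃ ε : Fin N → ℝ, (∀ i ∈ I, ε i = -1 ∨ ε i = 1) ∧
    ∃ μ : Fin N → ℝ,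
      ∀ x : Fin N → ℝ,
        Tendsto (fun k => (∑ i, |x i - y (φ k) i|) - ∑ i, |y (φ k) i|) atTop
          (𝓝 ((∑ i ∈ I, ε i * x i) + ∑ i ∈ Iᶜ, (|x i - μ i| - |μ i|))) := by
  classical
  -- compactify via arctan
  set a : ℕ → Fin N → ℝ := fun n i => Real.arctan (y n i) with ha
  have hmem : ∀ n, a n ∈ Set.pi Set.univ (fun _ : Fin N => Icc (-(π / 2)) (π / 2)) := by
    intro n i _
    exact mem_Icc_of_Ioo (Real.arctan_mem_Ioo (y n i))
  have hcpt : IsCompact (Set.pi Set.univ (fun _ : Fin N => Icc (-(π / 2)) (π / 2))) :=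
    isCompact_univ_pi fun _ => isCompact_Icc
  obtain ⟨L, _, φ, hφ, hL⟩ := hcpt.tendsto_subseq hmem
  have hLi : ∀ i, Tendsto (fun k => Real.arctan (y (φ k) i)) atTop (𝓝 (L i)) := by
    intro i
    exact (tendsto_pi_nhds.1 hL i)
  set I : Finset (Fin N) := Finset.univ.filter (fun i => L i = π / 2 ∨ L i = -(π / 2)) with hI
  set ε : Fin N → ℝ := fun i => if L i = π / 2 then -1 else 1 with hε
  set μ : Fin N → ℝ := fun i => Real.tan (L i) with hμ
  -- per-coordinate limits
  have hLIoo : ∀ i, i ∉ I → L i ∈ Ioo (-(π / 2)) (π / 2) := by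
    intro i hi
    simp only [hI, Finset.mem_filter, Finset.mem_univ, true_and, not_or] at hi
    have h1 : L i ∈ Icc (-(π / 2)) (π / 2) := by
      have : IsClosed (Icc (-(π / 2)) (π / 2) : Set ℝ) := isClosed_Icc
      exact this.mem_of_tendsto (hLi i)
        (Eventually.of_forall fun k => mem_Icc_of_Ioo (Real.arctan_mem_Ioo _))
    exact ⟨lt_of_le_of_ne h1.1 (Ne.symm hi.2), lt_of_le_of_ne h1.2 hi.1⟩
  have hcoord : ∀ (x : Fin N → ℝ) i,
      Tendsto (fun k => |x i - y (φ k) i| - |y (φ k) i|) atTop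
        (𝓝 (if i ∈ I then ε i * x i else |x i - μ i| - |μ i|)) := by
    intro x i
    by_cases hi : i ∈ I
    · simp only [hi, if_true]
      simp only [hI, Finset.mem_filter, Finset.mem_univ, true_and] at hi
      rcases hi with h | h
      · -- y → +∞, limit is -x i
        have hyT : Tendsto (fun k => y (φ k) i) atTop atTop :=
          aux_tendsto_atTop_of_arctan _ (h ▸ hLi i)
        have hev : ∀ᶠ k in atTop, |x i - y (φ k) i| - |y (φ k) i| = -x i := by
          filter_upwards [hyT.eventually_ge_atTop (max (x i) 0)] with k hk
          have h1 : x i ≤ y (φ k) i := le_trans (le_max_left _ _) hk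
          have h2 : (0:ℝ) ≤ y (φ k) i := le_trans (le_max_right _ _) hk
          have e1 : |x i - y (φ k) i| = y (φ k) i - x i := by
            rw [abs_of_nonpos (by linarith)]; ring
          rw [e1, abs_of_nonneg h2]; ring
        have : ε i * x i = -x i := by simp [hε, h]
        rw [this]
        exact tendsto_const_nhds.congr' (hev.mono fun k hk => hk.symm)
      · -- y → -∞, limit is x i
        have hyB : Tendsto (fun k => y (φ k) i) atTop atBot :=
          aux_tendsto_atBot_of_arctan _ (h ▸ hLi i)
        have hev : ∀ᶠ k in atTop, |x i - y (φ k) i| - |y (φ k) i| = x i := by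
          filter_upwards [hyB.eventually_le_atBot (min (x i) 0)] with k hk
          have h1 : y (φ k) i ≤ x i := le_trans hk (min_le_left _ _)
          have h2 : y (φ k) i ≤ 0 := le_trans hk (min_le_right _ _)
          rw [abs_of_nonneg (by linarith), abs_of_nonpos h2]; ring
        have hne : L i ≠ π / 2 := by
          rw [h]; intro hc
          have : (0:ℝ) < π / 2 := by positivity
          linarith [neg_lt_self this, hc]
        have : ε i * x i = x i := by simp [hε, hne]
        rw [this]
        exact tendsto_const_nhds.congr' (hev.mono fun k hk => hk.symm)
    · simp only [hi, if_false]
      have hyc : Tendsto (fun k => y (φ k) i) atTop (𝓝 (μ i)) :=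
        aux_tendsto_of_arctan _ _ (hLIoo i hi) (hLi i)
      have hcont : Continuous fun t : ℝ => |x i - t| - |t| := by continuity
      exact (hcont.continuousAt.tendsto).comp hyc
  -- I nonempty
  have hInon : I.Nonempty := by
    by_contra hemp
    rw [Finset.not_nonempty_iff_eq_empty] at hemp
    have hall : ∀ i, Tendsto (fun k => |y (φ k) i|) atTop (𝓝 |μ i|) := by
      intro i
      have hi : i ∉ I := by simp [hemp]
      exact (continuous_abs.continuousAt.tendsto).comp
        (aux_tendsto_of_arctan _ _ (hLIoo i hi) (hLi i))
    have hsum : Tendsto (fun k => ∑ i, |y (φ k) i|) atTop (𝓝 (∑ i, |μ i|)) :=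
      tendsto_finset_sum _ fun i _ => hall i
    exact not_tendsto_nhds_of_tendsto_atTop (hy.comp hφ.tendsto_atTop) _ hsum
  refine ⟨I, hInon, φ, hφ, ε, ?_, μ, ?_⟩
  · intro i _
    by_cases h : L i = π / 2 <;> simp [hε, h]
  · intro x
    have key : Tendsto (fun k => ∑ i, (|x i - y (φ k) i| - |y (φ k) i|)) atTop
        (𝓝 (∑ i, if i ∈ I then ε i * x i else |x i - μ i| - |μ i|)) :=
      tendsto_finset_sum _ fun i _ => hcoord x i
    have heq1 : ∀ k, (∑ i, |x i - y (φ k) i|) - ∑ i, |y (φ k) i|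
        = ∑ i, (|x i - y (φ k) i| - |y (φ k) i|) := by
      intro k; rw [Finset.sum_sub_distrib]
    have heq2 : (∑ i, if i ∈ I then ε i * x i else |x i - μ i| - |μ i|)
        = (∑ i ∈ I, ε i * x i) + ∑ i ∈ Iᶜ, (|x i - μ i| - |μ i|) := by
      rw [← Finset.sum_add_sum_compl I]
      congr 1
      · exact Finset.sum_congr rfl fun i hi => by simp [hi]
      · exact Finset.sum_congr rfl fun i hi => by
          simp [Finset.mem_compl.mp hi]
    rw [← heq2]
    exact key.congr fun k => (heq1 k).symm
end

section
/- Let N ≥ 2, 𝒩 = {1,...,N}, and suppose h : ℝ^𝒩 → ℝ is the pointwise limit of the functions τ₁(y^n), x ↦ ‖x − y^n‖₁ − ‖y^n‖₁, for some sequence (y^n) in ℝ^𝒩 with ‖y^n‖₁ → ∞. Then there exist a nonempty subset I ⊆ 𝒩, signs ε ∈ {−1,+1}^I, and μ ∈ ℝ^{𝒩∖I} such that h(x) = Σ_{i∈I} ε_i x_i + Σ_{i∈𝒩∖I} (|x_i − μ_i| − |μ_i|) for all x ∈ ℝ^𝒩. -/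
open Filter Topology

private lemma horo_aux_top {u : ℕ → ℝ} (hu : Tendsto u atTop atTop) (a : ℝ) :
    Tendsto (fun n => |a - u n| - |u n|) atTop (𝓝 (-a)) := by
  have he : ∀ᶠ n in atTop, (-a : ℝ) = |a - u n| - |u n| := by
    filter_upwards [hu.eventually_ge_atTop (|a|)] with n hn
    have h1 : a ≤ u n := (le_abs_self a).trans hn
    have h2 : (0:ℝ) ≤ u n := (abs_nonneg a).trans hn
    rw [abs_of_nonpos (by linarith), abs_of_nonneg h2]; ring
  exact Tendsto.congr' he tendsto_const_nhds

private lemma horo_aux_bot {u : ℕ → ℝ} (hu : Tendsto u atTop atBot) (a : ℝ) :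
    Tendsto (fun n => |a - u n| - |u n|) atTop (𝓝 a) := by
  have he : ∀ᶠ n in atTop, (a : ℝ) = |a - u n| - |u n| := by
    filter_upwards [hu.eventually_le_atBot (-|a|)] with n hn
    have h1 : u n ≤ a := hn.trans (by simpa using neg_abs_le a)
    have h2 : u n ≤ 0 := hn.trans (by simpa using abs_nonneg a)
    rw [abs_of_nonneg (by linarith), abs_of_nonpos h2]; ring
  exact Tendsto.congr' he tendsto_const_nhds

private lemma horo_coe_top {u : ℕ → ℝ} (hu : Tendsto (fun n => (u n : EReal)) atTop (𝓝 ⊤)) :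
    Tendsto u atTop atTop := by
  rw [EReal.tendsto_nhds_top_iff_real] at hu
  refine tendsto_atTop.2 fun b => ?_
  filter_upwards [hu b] with n hn
  exact le_of_lt (by exact_mod_cast hn)

private lemma horo_coe_bot {u : ℕ → ℝ} (hu : Tendsto (fun n => (u n : EReal)) atTop (𝓝 ⊥)) :
    Tendsto u atTop atBot := by
  rw [EReal.tendsto_nhds_bot_iff_real] at hu
  refine tendsto_atBot.2 fun b => ?_
  filter_upwards [hu b] with n hn
  exact le_of_lt (by exact_mod_cast hn)

/-- every pointwise limit of `τ₁(yⁿ)` with `‖yⁿ‖₁ → ∞` has the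
form `x ↦ ∑_{i ∈ I} ε_i x_i + ∑_{i ∉ I} (|x_i - μ_i| - |μ_i|)`. -/
theorem l1_horofunction_form (N : ℕ) (hN : 2 ≤ N) (h : (Fin N → ℝ) → ℝ)
    (y : ℕ → Fin N → ℝ)
    (hy : Tendsto (fun n => ∑ i, |y n i|) atTop atTop)
    (hlim : ∀ x : Fin N → ℝ,
      Tendsto (fun n => (∑ i, |x i - y n i|) - ∑ i, |y n i|) atTop (𝓝 (h x))) :
    ∃ I : Finset (Fin N), I.Nonempty ∧
    ∃ ε : Fin N → ℝ, (∀ i ∈ I, ε i = -1 ∨ ε i = 1) ∧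
    ∃ μ : Fin N → ℝ,
      ∀ x : Fin N → ℝ,
        h x = (∑ i ∈ I, ε i * x i) + ∑ i ∈ Iᶜ, (|x i - μ i| - |μ i|) := by
  classical
  obtain ⟨c, -, φ, hφ, hc⟩ := isCompact_univ.tendsto_subseq
    (x := fun n => (fun i => ((y n i : EReal)))) (fun n => Set.mem_univ _)
  have hci : ∀ i, Tendsto (fun n => ((y (φ n) i : EReal))) atTop (𝓝 (c i)) :=
    fun i => (tendsto_pi_nhds.1 hc) i
  set I : Finset (Fin N) := Finset.univ.filter (fun i => c i = ⊤ ∨ c i = ⊥) with hI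
  set ε : Fin N → ℝ := fun i => if c i = ⊤ then -1 else 1 with hε
  set μ : Fin N → ℝ := fun i => (c i).toReal with hμ
  have hfin : ∀ i, i ∉ I → Tendsto (fun n => y (φ n) i) atTop (𝓝 (μ i)) := by
    intro i hi
    simp only [hI, Finset.mem_filter, Finset.mem_univ, true_and, not_or] at hi
    have hcoe : c i = ((μ i : ℝ) : EReal) := (EReal.coe_toReal hi.1 hi.2).symm
    exact EReal.tendsto_coe.1 (hcoe ▸ hci i)
  have key : ∀ (i : Fin N) (a : ℝ),
      Tendsto (fun n => |a - y (φ n) i| - |y (φ n) i|) atTop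
        (𝓝 (if i ∈ I then ε i * a else |a - μ i| - |μ i|)) := by
    intro i a
    by_cases hi : i ∈ I
    · simp only [hi, if_true]
      have hi' := hi
      simp only [hI, Finset.mem_filter, Finset.mem_univ, true_and] at hi'
      rcases hi' with ht | hb
      · have : ε i * a = -a := by simp [hε, ht]
        rw [this]
        exact horo_aux_top (horo_coe_top (ht ▸ hci i)) a
      · have hne : c i ≠ ⊤ := by simp [hb]
        have : ε i * a = a := by simp [hε, hne]
        rw [this]
        exact horo_aux_bot (horo_coe_bot (hb ▸ hci i)) a
    · simp only [hi, if_false]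
      have hu := hfin i hi
      exact (tendsto_const_nhds.sub hu).abs.sub hu.abs
  have hIne : I.Nonempty := by
    by_contra hemp
    rw [Finset.not_nonempty_iff_eq_empty] at hemp
    have hall : Tendsto (fun n => ∑ i, |y (φ n) i|) atTop (𝓝 (∑ i, |μ i|)) := by
      refine tendsto_finset_sum _ fun i _ => ?_
      exact (hfin i (by simp [hemp])).abs
    exact not_tendsto_nhds_of_tendsto_atTop (hy.comp hφ.tendsto_atTop) (∑ i, |μ i|) hall
  refine ⟨I, hIne, ε, ?_, μ, ?_⟩
  · intro i hi
    by_cases ht : c i = ⊤ <;> simp [hε, ht]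
  · intro x
    have h1 : Tendsto (fun n => (∑ i, |x i - y (φ n) i|) - ∑ i, |y (φ n) i|) atTop (𝓝 (h x)) :=
      (hlim x).comp hφ.tendsto_atTop
    have h1' : Tendsto (fun n => ∑ i, (|x i - y (φ n) i| - |y (φ n) i|)) atTop (𝓝 (h x)) := by
      simpa [Finset.sum_sub_distrib] using h1
    have h2 : Tendsto (fun n => ∑ i, (|x i - y (φ n) i| - |y (φ n) i|)) atTop
        (𝓝 (∑ i, if i ∈ I then ε i * x i else |x i - μ i| - |μ i|)) :=
      tendsto_finset_sum _ fun i _ => key i (x i)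
    rw [tendsto_nhds_unique h1' h2, ← Finset.sum_add_sum_compl I]
    congr 1
    · exact Finset.sum_congr rfl fun i hi => by simp [hi]
    · exact Finset.sum_congr rfl fun i hi => by simp [Finset.mem_compl.1 hi]
end

section
/- Let N ≥ 2, 𝒩 = {1,...,N}, let I ⊆ 𝒩 be nonempty, ε ∈ {−1,+1}^I, and μ ∈ ℝ^{𝒩∖I}, and define h(x) = Σ_{i∈I} ε_i x_i + Σ_{i∈𝒩∖I} (|x_i − μ_i| − |μ_i|). Then there exists a sequence (y^n) in ℝ^𝒩 with ‖y^n‖₁ → ∞ such that ‖x − y^n‖₁ − ‖y^n‖₁ → h(x) for every x ∈ ℝ^𝒩, and moreover there is no z ∈ ℝ^𝒩 with h(x) = ‖x − z‖₁ − ‖z‖₁ for all x ∈ ℝ^𝒩. -/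
open Filter Topology

/-- every function `x ↦ ∑_{i ∈ I} ε_i x_i + ∑_{i ∉ I} (|x_i - μ_i| - |μ_i|)`
is a horofunction of `ℓ¹(𝒩, ℝ)`. -/
theorem l1_form_is_horofunction (N : ℕ) (hN : 2 ≤ N) (I : Finset (Fin N))
    (hI : I.Nonempty) (ε : Fin N → ℝ) (hε : ∀ i ∈ I, ε i = -1 ∨ ε i = 1)
    (μ : Fin N → ℝ) :
    (∃ y : ℕ → Fin N → ℝ,
      Tendsto (fun n => ∑ i, |y n i|) atTop atTop ∧
      ∀ x : Fin N → ℝ,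
        Tendsto (fun n => (∑ i, |x i - y n i|) - ∑ i, |y n i|) atTop
          (𝓝 ((∑ i ∈ I, ε i * x i) + ∑ i ∈ Iᶜ, (|x i - μ i| - |μ i|)))) ∧
    ¬∃ z : Fin N → ℝ, ∀ x : Fin N → ℝ,
      (∑ i ∈ I, ε i * x i) + ∑ i ∈ Iᶜ, (|x i - μ i| - |μ i|)
        = (∑ i, |x i - z i|) - ∑ i, |z i| := by
  obtain ⟨i₀, hi₀⟩ := hI
  constructor
  · refine ⟨fun n i => if i ∈ I then -ε i * n else μ i, ?_, ?_⟩
    · apply tendsto_atTop_mono (f := fun n : ℕ => (n : ℝ))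
      · intro n
        have h1 : |(fun i => if i ∈ I then -ε i * (n:ℝ) else μ i) i₀| = n := by
          simp only [hi₀, if_true]
          rcases hε i₀ hi₀ with h | h <;> simp [h, abs_of_nonneg, Nat.cast_nonneg]
        calc (n:ℝ) = |(fun i => if i ∈ I then -ε i * (n:ℝ) else μ i) i₀| := h1.symm
          _ ≤ _ := Finset.single_le_sum
            (f := fun i => |(fun i => if i ∈ I then -ε i * (n:ℝ) else μ i) i|)
            (fun i _ => abs_nonneg _) (Finset.mem_univ i₀)
      · exact tendsto_natCast_atTop_atTop
    · intro x
      have key : (fun _ : ℕ => (∑ i ∈ I, ε i * x i) + ∑ i ∈ Iᶜ, (|x i - μ i| - |μ i|))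
          =ᶠ[atTop] (fun n : ℕ => (∑ i, |x i - (if i ∈ I then -ε i * (n:ℝ) else μ i)|)
            - ∑ i, |if i ∈ I then -ε i * (n:ℝ) else μ i|) := by
        filter_upwards [eventually_ge_atTop ⌈∑ i, |x i|⌉₊] with n hn
        have hn' : ∀ i, |x i| ≤ (n : ℝ) := by
          intro i
          calc |x i| ≤ ∑ j, |x j| := Finset.single_le_sum (f := fun j => |x j|)
                (fun j _ => abs_nonneg _) (Finset.mem_univ i)
            _ ≤ ⌈∑ j, |x j|⌉₊ := Nat.le_ceil _
            _ ≤ (n : ℝ) := by exact_mod_cast hn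
        rw [← Finset.sum_sub_distrib, ← Finset.sum_add_sum_compl I
          (fun i => |x i - (if i ∈ I then -ε i * (n:ℝ) else μ i)|
            - |if i ∈ I then -ε i * (n:ℝ) else μ i|)]
        congr 1
        · apply Finset.sum_congr rfl
          intro i hi
          simp only [hi, if_true]
          have h1 : -x i ≤ (n:ℝ) := (neg_le_abs _).trans (hn' i)
          have h2 : x i ≤ (n:ℝ) := (le_abs_self _).trans (hn' i)
          rcases hε i hi with h | h
          · simp only [h]
            rw [show x i - -(-1:ℝ)*n = x i - n by ring, abs_of_nonpos (by linarith),
              show -(-1:ℝ)*(n:ℝ) = (n:ℝ) by ring, abs_of_nonneg (by positivity)]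
            ring
          · simp only [h]
            rw [show x i - -(1:ℝ)*n = x i + n by ring, abs_of_nonneg (by linarith),
              show -(1:ℝ)*(n:ℝ) = -(n:ℝ) by ring, abs_neg, abs_of_nonneg (by positivity)]
            ring
        · apply Finset.sum_congr rfl
          intro i hi
          rw [Finset.mem_compl] at hi
          simp [hi]
      exact tendsto_const_nhds.congr' key
  · rintro ⟨z, hz⟩
    have key : ∀ t : ℝ, ε i₀ * t = |t - z i₀| - |z i₀| := by
      intro t
      have := hz (fun j => if j = i₀ then t else 0)
      rw [Finset.sum_eq_single_of_mem i₀ hi₀ (by intro i _ hne; simp [hne]),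
        Finset.sum_eq_zero (by
          intro i hi
          rw [Finset.mem_compl] at hi
          have hne : i ≠ i₀ := fun h => hi (h ▸ hi₀)
          simp [hne]), add_zero, ← Finset.sum_sub_distrib,
        Finset.sum_eq_single_of_mem i₀ (Finset.mem_univ i₀)
          (by intro i _ hne; simp [hne])] at this
      simpa using this
    have hε₀ : ε i₀ = -1 ∨ ε i₀ = 1 := hε i₀ hi₀
    have h1 := key (z i₀)
    have h2 := key (z i₀ - ε i₀)
    simp only [sub_self, abs_zero, zero_sub, sub_sub_cancel_left, abs_neg] at h1 h2
    rcases hε₀ with h | h <;> rw [h] at h1 h2 <;>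
      simp [abs_of_nonneg, abs_of_nonpos] at h1 h2 <;>
      rcases abs_cases (z i₀) with ⟨ha, _⟩ | ⟨ha, _⟩ <;> rw [ha] at h1 <;> linarith
end

section
/- Let 1 < p < ∞ and q with 1/p + 1/q = 1, let N ≥ 1, 𝒩 = {1,...,N}, and let (y^n) be a sequence in ℝ^𝒩 with ‖y^n‖_p → ∞ as n → ∞. Then there exist μ ∈ ℝ^𝒩 with ‖μ‖_q = 1 and a subsequence (y^{n_k}) such that for every x ∈ ℝ^𝒩, the values ‖x − y^{n_k}‖_p − ‖y^{n_k}‖_p converge as k → ∞ to h_μ(x) = −Σ_{i∈𝒩} μ_i x_i. -/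
/-!
A subsequence of the directions `yₙ / ‖yₙ‖_p` converges, by compactness of the unit sphere, to
some `u` with `‖u‖_p = 1`. For `1 < p` the `ℓᵖ` norm is strictly differentiable at `u` with
gradient `μᵢ = |uᵢ| ^ (p - 2) uᵢ`, and `‖μ‖_q = ‖u‖_p ^ (p - 1) = 1`. Writing `rₙ = ‖yₙ‖_p`,
homogeneity gives `‖yₙ - x‖_p - ‖yₙ‖_p = rₙ (‖yₙ/rₙ - x/rₙ‖_p - ‖yₙ/rₙ‖_p)`, a difference
quotient of the norm with step `x/rₙ → 0` at base points tending to `u`; strict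
differentiability is exactly what makes it converge to `-⟪μ, x⟫`.
-/

open Filter Topology Asymptotics

section

variable {E : Type*} [NormedAddCommGroup E] [NormedSpace ℝ E]

theorem HasStrictFDerivAt.tendsto_add_sub_of_inv_smul_tendsto {F : E → ℝ} {L : E →L[ℝ] ℝ}
    {u : E} (hL : HasStrictFDerivAt F L u) (hF : ∀ c : ℝ, 0 < c → ∀ z, F (c • z) = c * F z)
    {α : Type*} {l : Filter α} {y : α → E} {r : α → ℝ} (hr : Tendsto r l atTop)
    (hy : Tendsto (fun n => (r n)⁻¹ • y n) l (𝓝 u)) (x : E) :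
    Tendsto (fun n => F (y n + x) - F (y n)) l (𝓝 (L x)) := by
  have hb : Tendsto (fun n => (r n)⁻¹ • y n + (r n)⁻¹ • x) l (𝓝 u) := by
    simpa using hy.add (hr.inv_tendsto_atTop.smul_const x)
  have hrem : (fun n => F ((r n)⁻¹ • y n + (r n)⁻¹ • x) - F ((r n)⁻¹ • y n) - (r n)⁻¹ * L x)
      =o[l] fun n => (r n)⁻¹ := by
    refine ((hL.isLittleO.comp_tendsto (hb.prodMk_nhds hy)).trans_isBigO
      (isBigO_of_le' l (c := ‖x‖) fun n => ?_)).congr_left fun n => ?_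
    · simp [norm_smul, mul_comm]
    · simp
  refine ((hrem.tendsto_div_nhds_zero.add_const (L x)).congr' ?_).trans (by rw [zero_add])
  filter_upwards [hr.eventually_gt_atTop 0] with n hn
  rw [← smul_add, hF _ (inv_pos.2 hn), hF _ (inv_pos.2 hn)]
  field_simp
  ring

end

section

variable {ι : Type*} [Fintype ι] {p : ℝ}

noncomputable def pNorm (p : ℝ) (x : ι → ℝ) : ℝ := (∑ i, |x i| ^ p) ^ (1 / p)

lemma sum_abs_rpow_nonneg (x : ι → ℝ) : 0 ≤ ∑ i, |x i| ^ p :=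
  Finset.sum_nonneg fun _ _ => Real.rpow_nonneg (abs_nonneg _) _

lemma pNorm_smul (hp : 0 < p) (c : ℝ) (x : ι → ℝ) : pNorm p (c • x) = |c| * pNorm p x := by
  simp only [pNorm, Pi.smul_apply, smul_eq_mul, abs_mul,
    Real.mul_rpow (abs_nonneg c) (abs_nonneg _), ← Finset.mul_sum]
  rw [Real.mul_rpow (Real.rpow_nonneg (abs_nonneg c) _) (sum_abs_rpow_nonneg x),
    ← Real.rpow_mul (abs_nonneg c), mul_one_div_cancel hp.ne', Real.rpow_one]

lemma continuous_pNorm (hp : 0 < p) : Continuous (pNorm p : (ι → ℝ) → ℝ) := by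
  refine (continuous_finsetSum _ fun i _ => ?_).rpow_const fun _ => Or.inr (by positivity)
  exact (continuous_apply i).abs.rpow_const fun _ => Or.inr hp.le

lemma norm_le_pNorm (hp : 0 < p) (x : ι → ℝ) : ‖x‖ ≤ pNorm p x := by
  refine pi_norm_le_iff_of_nonneg (Real.rpow_nonneg (sum_abs_rpow_nonneg x) _) |>.2 fun i => ?_
  calc ‖x i‖ = (|x i| ^ p) ^ (1 / p) := by
        rw [Real.norm_eq_abs, ← Real.rpow_mul (abs_nonneg _), mul_one_div_cancel hp.ne',
          Real.rpow_one]
    _ ≤ (∑ j, |x j| ^ p) ^ (1 / p) := by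
        gcongr
        exact Finset.single_le_sum (f := fun i => |x i| ^ p)
          (fun j _ => Real.rpow_nonneg (abs_nonneg _) _) (Finset.mem_univ i)

lemma isCompact_pNorm_eq_one (hp : 0 < p) : IsCompact {x : ι → ℝ | pNorm p x = 1} :=
  Metric.isCompact_of_isClosed_isBounded (isClosed_eq (continuous_pNorm hp) continuous_const)
    ((Metric.isBounded_closedBall (x := 0) (r := 1)).subset fun x (hx : pNorm p x = 1) => by
      simpa [hx] using norm_le_pNorm hp x)

lemma exists_subseq_inv_smul_tendsto (hp : 0 < p) {y : ℕ → ι → ℝ}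
    (hy : Tendsto (fun n => pNorm p (y n)) atTop atTop) :
    ∃ u, pNorm p u = 1 ∧ ∃ φ : ℕ → ℕ, StrictMono φ ∧
      Tendsto (fun k => (pNorm p (y (φ k)))⁻¹ • y (φ k)) atTop (𝓝 u) := by
  have hK : ∃ᶠ n in atTop, (pNorm p (y n))⁻¹ • y n ∈ {x : ι → ℝ | pNorm p x = 1} := by
    refine Eventually.frequently ((hy.eventually_gt_atTop 0).mono fun n hn => ?_)
    rw [Set.mem_ofPred_eq, pNorm_smul hp, abs_of_pos (inv_pos.2 hn), inv_mul_cancel₀ hn.ne']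
  exact (isCompact_pNorm_eq_one hp).tendsto_subseq' hK

lemma hasStrictDerivAt_abs_rpow (hp : 1 < p) (s : ℝ) :
    HasStrictDerivAt (fun s : ℝ => |s| ^ p) (p * |s| ^ (p - 2) * s) s := by
  have h := ((contDiff_norm_rpow (E := ℝ) hp).contDiffAt (x := s)).hasStrictDerivAt one_ne_zero
  rw [(hasDerivAt_norm_rpow s hp).deriv] at h
  simpa only [Real.norm_eq_abs] using h

noncomputable def pDual (p : ℝ) (u : ι → ℝ) : ι → ℝ := fun i => |u i| ^ (p - 2) * u i

lemma hasStrictFDerivAt_pNorm (hp : 1 < p) {u : ι → ℝ} (hu : pNorm p u ≠ 0) :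
    HasStrictFDerivAt (pNorm p)
      (pNorm p u ^ (1 - p) •
        ∑ i, pDual p u i • ContinuousLinearMap.proj (R := ℝ) (φ := fun _ : ι => ℝ) i) u := by
  have hp0 : p ≠ 0 := (zero_lt_one.trans hp).ne'
  have hS : HasStrictFDerivAt (fun z : ι → ℝ => ∑ i, |z i| ^ p)
      (∑ i, (p * pDual p u i) • ContinuousLinearMap.proj (R := ℝ) (φ := fun _ : ι => ℝ) i) u :=
    HasStrictFDerivAt.fun_sum fun i _ => by
      simpa only [pDual, mul_assoc, Function.comp_def] using
        (hasStrictDerivAt_abs_rpow hp (u i)).comp_hasStrictFDerivAt (f := fun z : ι → ℝ => z i) u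
          (hasStrictFDerivAt_apply i u)
  have hS0 : ∑ i, |u i| ^ p ≠ 0 := fun h => hu (by simp [pNorm, h, hp0])
  refine (hS.rpow_const (p := 1 / p) (Or.inl hS0)).congr_fderiv ?_
  rw [pNorm, ← Real.rpow_mul (sum_abs_rpow_nonneg u), show 1 / p * (1 - p) = 1 / p - 1 by
    field_simp, Finset.smul_sum, Finset.smul_sum]
  refine Finset.sum_congr rfl fun i _ => ?_
  rw [smul_smul, smul_smul]
  field_simp

lemma pNorm_pDual {q : ℝ} (hpq : p.HolderConjugate q) (u : ι → ℝ) :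
    pNorm q (pDual p u) = pNorm p u ^ (p - 1) := by
  have habs : ∀ i, |pDual p u i| ^ q = |u i| ^ p := fun i => by
    rw [pDual, abs_mul, abs_of_nonneg (Real.rpow_nonneg (abs_nonneg _) _),
      ← Real.rpow_add_one' (abs_nonneg _) (by linarith [hpq.sub_one_pos]),
      ← Real.rpow_mul (abs_nonneg _), show (p - 2 + 1) * q = p by
        linear_combination hpq.sub_one_mul_conj]
  rw [pNorm, pNorm, Finset.sum_congr rfl fun i _ => habs i,
    ← Real.rpow_mul (sum_abs_rpow_nonneg u)]
  congr 1
  rw [one_div, one_div, ← hpq.one_sub_inv]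
  field_simp [hpq.pos.ne']

end

theorem lp_horofunction_subsequence_general (p q : ℝ) (hp : 1 < p) (hpq : 1/p + 1/q = 1)
    (N : ℕ) (y : ℕ → Fin N → ℝ)
    (hy : Tendsto (fun n => (∑ i, |y n i| ^ p) ^ (1/p)) atTop atTop) :
    ∃ μ : Fin N → ℝ, (∑ i, |μ i| ^ q) ^ (1/q) = 1 ∧
    ∃ φ : ℕ → ℕ, StrictMono φ ∧
      ∀ x : Fin N → ℝ,
        Tendsto (fun k =>
            (∑ i, |x i - y (φ k) i| ^ p) ^ (1/p) - (∑ i, |y (φ k) i| ^ p) ^ (1/p))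
          atTop (𝓝 (-∑ i, μ i * x i)) := by
  have hp0 : 0 < p := zero_lt_one.trans hp
  have hpq' : p.HolderConjugate q :=
    Real.holderConjugate_iff.2 ⟨hp, by simpa only [one_div] using hpq⟩
  obtain ⟨u, hu, φ, hφ, hφu⟩ := exists_subseq_inv_smul_tendsto hp0 hy
  have hL := hasStrictFDerivAt_pNorm hp (hu.symm ▸ one_ne_zero)
  rw [hu, Real.one_rpow, one_smul] at hL
  refine ⟨pDual p u, by rw [← pNorm, pNorm_pDual hpq', hu, Real.one_rpow], φ, hφ, fun x => ?_⟩
  have h := hL.tendsto_add_sub_of_inv_smul_tendsto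
    (fun c hc z => by rw [pNorm_smul hp0, abs_of_pos hc]) (hy.comp hφ.tendsto_atTop) hφu (-x)
  simpa [pNorm, ← sub_eq_add_neg, abs_sub_comm] using h

/-- Lemma 4.2 of the paper, for `ℓᵖ(𝒩, ℝ)`, `1 < p < ∞`. -/
theorem lp_horofunction_subsequence (p q : ℝ) (hp : 1 < p) (hpq : 1/p + 1/q = 1)
    (N : ℕ) (hN : 1 ≤ N) (y : ℕ → Fin N → ℝ)
    (hy : Tendsto (fun n => (∑ i, |y n i| ^ p) ^ (1/p)) atTop atTop) :
    ∃ μ : Fin N → ℝ, (∑ i, |μ i| ^ q) ^ (1/q) = 1 ∧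
    ∃ φ : ℕ → ℕ, StrictMono φ ∧
      ∀ x : Fin N → ℝ,
        Tendsto (fun k =>
            (∑ i, |x i - y (φ k) i| ^ p) ^ (1/p) - (∑ i, |y (φ k) i| ^ p) ^ (1/p))
          atTop (𝓝 (-∑ i, μ i * x i)) :=
  lp_horofunction_subsequence_general p q hp hpq N y hy
end

section
/- Let N ≥ 1, 𝒩 = {1,...,N}, and let (y^n) be a sequence in ℝ^𝒩 with ‖y^n‖_∞ → ∞ as n → ∞, where ‖x‖_∞ = max_{i∈𝒩} |x_i|. Then there exist subsets I, J ⊆ 𝒩 with I ∩ J = ∅ and I ∪ J ≠ ∅, vectors μ ∈ ℝ^I and ν ∈ ℝ^J with all entries nonnegative and with min of the combined family (μ_i)_{i∈I}, (ν_j)_{j∈J} equal to 0, and a subsequence (y^{n_k}) such that for every x ∈ ℝ^𝒩, the values ‖x − y^{n_k}‖_∞ − ‖y^{n_k}‖_∞ converge as k → ∞ to h(x) = max( max_{i∈I} (x_i − μ_i), max_{j∈J} (−x_j − ν_j) ) (where a maximum over an empty index set is omitted). -/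
/-!
Put `b i = ‖y‖ + y i` and `a i = ‖y‖ - y i`, the slacks of the constraints `∓ y i ≤ ‖y‖`, as one
family `supNormSlack y` on `ι ⊕ ι`. Then `‖x - y‖ - ‖y‖` is the maximum over `ι ⊕ ι` of
`± x i - slack`. The slacks are nonnegative, one of them vanishes, and `a i + b i = 2 ‖y‖ → ∞`.
By compactness of `[0, ∞]^(ι ⊕ ι)` all slacks converge along a subsequence; `I` and `J` are the
coordinates where `b`, resp. `a`, stays finite, they are disjoint, a vanishing slack gives a
vanishing limit, and the terms with infinite slack tend to `-∞` and drop out of the maximum.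
-/

open Filter Topology
open scoped ENNReal

section Lattice

variable {α β κ : Type*} [ConditionallyCompleteLinearOrder β]

theorem ciSup_eq_finset_sup'_of_le [Finite κ] {f : κ → β} {s : Finset κ} (hs : s.Nonempty)
    (h : ∀ p ∉ s, f p ≤ s.sup' hs f) : ⨆ p, f p = s.sup' hs f := by
  have : Nonempty κ := hs.to_subtype.map Subtype.val
  refine le_antisymm (ciSup_le fun p => ?_)
    (Finset.sup'_le _ _ fun p _ => le_ciSup (Finite.bddAbove_range f) p)
  by_cases hp : p ∈ s
  · exact Finset.le_sup' f hp
  · exact h p hp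

variable [TopologicalSpace β] [OrderTopology β] [NoMinOrder β]

theorem tendsto_ciSup_of_tendsto_atBot_of_notMem [Finite κ] {l : Filter α} {f : κ → α → β}
    {g : κ → β} {s : Finset κ} (hs : s.Nonempty) (h_mem : ∀ p ∈ s, Tendsto (f p) l (𝓝 (g p)))
    (h_notMem : ∀ p ∉ s, Tendsto (f p) l atBot) :
    Tendsto (fun a => ⨆ p, f p a) l (𝓝 (s.sup' hs g)) := by
  have hsup := Tendsto.finset_sup'_nhds_apply hs h_mem
  obtain ⟨b, hb⟩ := exists_lt (s.sup' hs g)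
  have hbelow : ∀ᶠ a in l, ∀ p ∉ s, f p a ≤ b :=
    eventually_all.2 fun p => by
      by_cases hp : p ∈ s
      · exact .of_forall fun _ h => absurd hp h
      · filter_upwards [(h_notMem p hp).eventually_le_atBot b] with a ha _ using ha
  refine hsup.congr' ?_
  filter_upwards [hbelow, hsup.eventually (eventually_ge_nhds hb)] with a hfb hbs
  exact (ciSup_eq_finset_sup'_of_le hs fun p hp => (hfb p hp).trans hbs).symm

end Lattice

theorem Finset.sup'_disjSum_elim {ι α : Type*} [SemilatticeSup α] [DecidableEq ι]
    {I J : Finset ι} (hIJ : Disjoint I J) (hs : (I.disjSum J).Nonempty)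
    (hne : (I ∪ J).Nonempty) (f g : ι → α) :
    (I.disjSum J).sup' hs (Sum.elim f g) =
      (I ∪ J).sup' hne fun i => if i ∈ I then f i else g i := by
  refine le_antisymm (Finset.sup'_le _ _ ?_) (Finset.sup'_le _ _ fun i hi => ?_)
  · rintro (i | j) h
    · have hi := Finset.inl_mem_disjSum.1 h
      convert (I ∪ J).le_sup' (fun i => if i ∈ I then f i else g i) (Finset.mem_union_left J hi)
      simp [hi]
    · have hj := Finset.inr_mem_disjSum.1 h
      convert (I ∪ J).le_sup' (fun i => if i ∈ I then f i else g i) (Finset.mem_union_right I hj)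
      simp [Finset.disjoint_right.1 hIJ hj]
  · split_ifs with hI
    · exact (I.disjSum J).le_sup' (Sum.elim f g) (Finset.inl_mem_disjSum.2 hI)
    · exact (I.disjSum J).le_sup' (Sum.elim f g)
        (Finset.inr_mem_disjSum.2 ((Finset.mem_union.1 hi).resolve_left hI))

theorem ENNReal.tendsto_toReal_of_tendsto_ofReal {α : Type*} {l : Filter α} {u : α → ℝ}
    (hu : ∀ a, 0 ≤ u a) {L : ℝ≥0∞} (h : Tendsto (fun a => ENNReal.ofReal (u a)) l (𝓝 L))
    (hL : L ≠ ∞) : Tendsto u l (𝓝 L.toReal) :=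
  ((ENNReal.tendsto_toReal hL).comp h).congr fun a => ENNReal.toReal_ofReal (hu a)

theorem exists_eq_of_tendsto_of_forall_exists_eq {α β κ : Type*} [Finite κ] [TopologicalSpace β]
    [T1Space β] {l : Filter α} [l.NeBot] {u : κ → α → β} {L : κ → β}
    (hu : ∀ p, Tendsto (u p) l (𝓝 (L p))) {b : β} (hb : ∀ a, ∃ p, u p a = b) : ∃ p, L p = b := by
  by_contra! h
  obtain ⟨a, ha⟩ := (eventually_all.2 fun p => (hu p).eventually (isOpen_ne.mem_nhds (h p))).exists
  obtain ⟨p, hp⟩ := hb a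
  exact ha p hp

section SupNorm

variable {ι : Type*}

noncomputable def supNormSlack (y : ι → ℝ) (p : ι ⊕ ι) : ℝ := (⨆ i, |y i|) + Sum.elim y (-y) p

theorem ciSup_abs_eq_ciSup_sum_elim [Finite ι] [Nonempty ι] (f : ι → ℝ) :
    ⨆ i, |f i| = ⨆ p, Sum.elim f (-f) p := by
  have hbdd := Finite.bddAbove_range (Sum.elim f (-f))
  refine le_antisymm (ciSup_le fun i => abs_le'.2 ⟨le_ciSup hbdd (.inl i), le_ciSup hbdd (.inr i)⟩)
    (ciSup_le ?_)
  have hbdd_abs := Finite.bddAbove_range fun i => |f i|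
  rintro (i | i)
  · exact (le_abs_self (f i)).trans (le_ciSup hbdd_abs i)
  · exact (neg_le_abs (f i)).trans (le_ciSup hbdd_abs i)

theorem supNormSlack_nonneg [Finite ι] (y : ι → ℝ) (p : ι ⊕ ι) : 0 ≤ supNormSlack y p := by
  have hbdd := Finite.bddAbove_range fun i => |y i|
  rcases p with i | i
  · have := (neg_abs_le (y i)).trans' (neg_le_neg (le_ciSup hbdd i))
    simp only [supNormSlack, Sum.elim_inl]; linarith
  · have := (le_abs_self (y i)).trans (le_ciSup hbdd i)
    simp only [supNormSlack, Sum.elim_inr, Pi.neg_apply]; linarith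

theorem exists_supNormSlack_eq_zero [Finite ι] [Nonempty ι] (y : ι → ℝ) :
    ∃ p, supNormSlack y p = 0 := by
  obtain ⟨i, hi⟩ := exists_eq_ciSup_of_finite (f := fun i => |y i|)
  rcases abs_choice (y i) with h | h
  · exact ⟨.inr i, by simp [supNormSlack, ← hi, h]⟩
  · exact ⟨.inl i, by simp [supNormSlack, ← hi, h]⟩

theorem supNormSlack_inl_add_inr (y : ι → ℝ) (i : ι) :
    supNormSlack y (.inl i) + supNormSlack y (.inr i) = 2 * ⨆ i, |y i| := by
  simp only [supNormSlack, Sum.elim_inl, Sum.elim_inr, Pi.neg_apply]; ring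

theorem ciSup_abs_sub_sub_ciSup_abs [Finite ι] [Nonempty ι] (x y : ι → ℝ) :
    (⨆ i, |x i - y i|) - ⨆ i, |y i| = ⨆ p, (Sum.elim x (-x) p - supNormSlack y p) := by
  have h := ciSup_abs_eq_ciSup_sum_elim (x - y)
  simp only [Pi.sub_apply] at h
  rw [h, ciSup_sub (Finite.bddAbove_range _)]
  congr 1 with (i | i) <;>
    simp only [supNormSlack, Sum.elim_inl, Sum.elim_inr, Pi.neg_apply, Pi.sub_apply] <;> ring

theorem exists_subseq_supNormSlack_tendsto [Finite ι] [Nonempty ι] {y : ℕ → ι → ℝ}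
    (hy : Tendsto (fun n => ⨆ i, |y n i|) atTop atTop) :
    ∃ L : ι ⊕ ι → ℝ≥0∞, ∃ φ : ℕ → ℕ, StrictMono φ ∧ (∃ p, L p = 0) ∧
      (∀ i, L (.inl i) = ∞ ∨ L (.inr i) = ∞) ∧
      ∀ p, (L p ≠ ∞ → Tendsto (fun k => supNormSlack (y (φ k)) p) atTop (𝓝 (L p).toReal)) ∧
        (L p = ∞ → Tendsto (fun k => supNormSlack (y (φ k)) p) atTop atTop) := by
  obtain ⟨L, -, φ, hφ, hL⟩ := isCompact_univ.tendsto_subseq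
    (x := fun n p => ENNReal.ofReal (supNormSlack (y n) p)) fun _ => Set.mem_univ _
  have hLp := tendsto_pi_nhds.1 hL
  have hfin p : L p ≠ ∞ → Tendsto (fun k => supNormSlack (y (φ k)) p) atTop (𝓝 (L p).toReal) :=
    ENNReal.tendsto_toReal_of_tendsto_ofReal (fun k => supNormSlack_nonneg _ p) (hLp p)
  refine ⟨L, φ, hφ, ?_, fun i => ?_,
    fun p => ⟨hfin p, fun h => ENNReal.tendsto_ofReal_nhds_top.1 (h ▸ hLp p)⟩⟩
  · exact exists_eq_of_tendsto_of_forall_exists_eq hLp fun k =>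
      (exists_supNormSlack_eq_zero (y (φ k))).imp fun p hp => by simp [hp]
  · by_contra! h
    refine not_tendsto_atTop_of_tendsto_nhds ((hfin _ h.1).add (hfin _ h.2)) ?_
    simp only [supNormSlack_inl_add_inr]
    exact (hy.comp hφ.tendsto_atTop).const_mul_atTop two_pos

end SupNorm

/-- Lemma 5.1 of the paper, for `ℓ^∞(𝒩, ℝ)`. -/
theorem linf_horofunction_subsequence (N : ℕ) (hN : 1 ≤ N) (y : ℕ → Fin N → ℝ)
    (hy : Tendsto (fun n => ⨆ i, |y n i|) atTop atTop) :
    ∃ I J : Finset (Fin N), ∃ hne : (I ∪ J).Nonempty, Disjoint I J ∧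
    ∃ μ ν : Fin N → ℝ,
      (∀ i ∈ I, 0 ≤ μ i) ∧ (∀ j ∈ J, 0 ≤ ν j) ∧
      ((∃ i ∈ I, μ i = 0) ∨ (∃ j ∈ J, ν j = 0)) ∧
    ∃ φ : ℕ → ℕ, StrictMono φ ∧
      ∀ x : Fin N → ℝ,
        Tendsto (fun k => (⨆ i, |x i - y (φ k) i|) - ⨆ i, |y (φ k) i|) atTop
          (𝓝 ((I ∪ J).sup' hne fun i => if i ∈ I then x i - μ i else -x i - ν i)) := by
  have : Nonempty (Fin N) := ⟨⟨0, hN⟩⟩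
  obtain ⟨L, φ, hφ, ⟨p₀, hp₀⟩, htop, hL⟩ := exists_subseq_supNormSlack_tendsto hy
  set I := Finset.univ.filter fun i => L (.inl i) ≠ ∞
  set J := Finset.univ.filter fun i => L (.inr i) ≠ ∞
  have hmem : ∀ p, p ∈ I.disjSum J ↔ L p ≠ ∞ := by rintro (i | i) <;> simp [I, J]
  have hs : (I.disjSum J).Nonempty := ⟨p₀, (hmem p₀).2 (by simp [hp₀])⟩
  have hne : (I ∪ J).Nonempty := by
    obtain ⟨i | i, h⟩ := hs
    exacts [⟨i, Finset.mem_union_left J (Finset.inl_mem_disjSum.1 h)⟩,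
      ⟨i, Finset.mem_union_right I (Finset.inr_mem_disjSum.1 h)⟩]
  have hIJ : Disjoint I J := Finset.disjoint_left.2 fun i hI hJ => by
    simp only [I, J, Finset.mem_filter, Finset.mem_univ, true_and] at hI hJ
    exact (htop i).elim hI hJ
  refine ⟨I, J, hne, hIJ, fun i => (L (.inl i)).toReal, fun i => (L (.inr i)).toReal,
    fun _ _ => ENNReal.toReal_nonneg, fun _ _ => ENNReal.toReal_nonneg, ?_, φ, hφ, fun x => ?_⟩
  · rcases p₀ with i | i
    exacts [.inl ⟨i, by simp [I, hp₀], by simp [hp₀]⟩, .inr ⟨i, by simp [J, hp₀], by simp [hp₀]⟩]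
  simp only [ciSup_abs_sub_sub_ciSup_abs]
  rw [← Finset.sup'_disjSum_elim hIJ hs]
  refine tendsto_ciSup_of_tendsto_atBot_of_notMem hs (fun p hp => ?_) fun p hp => ?_
  · convert tendsto_const_nhds.sub ((hL p).1 ((hmem p).1 hp)) using 2
    rcases p with i | i <;> rfl
  · simp only [sub_eq_add_neg]
    exact tendsto_atBot_add_const_left _ _
      (tendsto_neg_atBot_iff.2 ((hL p).2 (not_not.1 ((hmem p).not.1 hp))))
end

section
/- Let N ≥ 1, 𝒩 = {1,...,N}, and suppose h : ℝ^𝒩 → ℝ is the pointwise limit of the functions x ↦ ‖x − y^n‖_∞ − ‖y^n‖_∞ for some sequence (y^n) in ℝ^𝒩 with ‖y^n‖_∞ → ∞. Then there exist disjoint subsets I, J ⊆ 𝒩 with I ∪ J ≠ ∅ and nonnegative vectors μ ∈ ℝ^I, ν ∈ ℝ^J whose combined minimum is 0, such that h(x) = max( max_{i∈I} (x_i − μ_i), max_{j∈J} (−x_j − ν_j) ) for all x ∈ ℝ^𝒩 (where a maximum over an empty index set is omitted). -/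
open Filter Topology

private lemma tendsto_sup'_ereal {ι : Type*} (s : Finset ι) (hs : s.Nonempty)
    (f : ℕ → ι → EReal) (L : ι → EReal)
    (hf : ∀ i ∈ s, Tendsto (fun n => f n i) atTop (𝓝 (L i))) :
    Tendsto (fun n => s.sup' hs fun i => f n i) atTop (𝓝 (s.sup' hs L)) := by
  induction hs using Finset.Nonempty.cons_induction with
  | singleton a =>
      simp only [Finset.sup'_singleton]
      exact hf a (Finset.mem_singleton_self a)
  | cons a s h hs ih =>
      simp only [Finset.sup'_cons hs]
      exact Tendsto.max (hf a (Finset.mem_cons_self a s))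
        (ih fun i hi => hf i (Finset.mem_cons_of_mem hi))

private lemma ereal_tendsto_const_add (c : ℝ) {u : ℕ → EReal} {L : EReal}
    (hu : Tendsto u atTop (𝓝 L)) :
    Tendsto (fun n => (c : EReal) + u n) atTop (𝓝 ((c : EReal) + L)) := by
  have hc := EReal.continuousAt_add (p := ((c : EReal), L))
    (Or.inl (EReal.coe_ne_top c)) (Or.inl (EReal.coe_ne_bot c))
  exact hc.tendsto.comp (tendsto_const_nhds.prodMk_nhds hu)

private lemma sup'_sub_const {ι : Type*} (s : Finset ι) (hs : s.Nonempty)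
    (f : ι → ℝ) (c : ℝ) :
    s.sup' hs (fun i => f i - c) = s.sup' hs f - c :=
  (Finset.comp_sup'_eq_sup'_comp hs (fun r => r - c)
    (fun a b => (max_sub_sub_right a b c).symm)).symm

private lemma sup'_coe_ereal {ι : Type*} (s : Finset ι) (hs : s.Nonempty) (f : ι → ℝ) :
    ((s.sup' hs f : ℝ) : EReal) = s.sup' hs (fun i => ((f i : ℝ) : EReal)) :=
  Finset.comp_sup'_eq_sup'_comp hs Real.toEReal
    (fun _ _ => EReal.coe_strictMono.monotone.map_max)

/-- every pointwise limit of `τ_∞(yⁿ)` with `‖yⁿ‖_∞ → ∞` has the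
form `x ↦ max(max_{i ∈ I} (x_i - μ_i), max_{j ∈ J} (-x_j - ν_j))`. -/
theorem linf_horofunction_form (N : ℕ) (hN : 1 ≤ N) (h : (Fin N → ℝ) → ℝ)
    (y : ℕ → Fin N → ℝ)
    (hy : Tendsto (fun n => ⨆ i, |y n i|) atTop atTop)
    (hlim : ∀ x : Fin N → ℝ,
      Tendsto (fun n => (⨆ i, |x i - y n i|) - ⨆ i, |y n i|) atTop (𝓝 (h x))) :
    ∃ I J : Finset (Fin N), ∃ hne : (I ∪ J).Nonempty, Disjoint I J ∧
    ∃ μ ν : Fin N → ℝ,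
      (∀ i ∈ I, 0 ≤ μ i) ∧ (∀ j ∈ J, 0 ≤ ν j) ∧
      ((∃ i ∈ I, μ i = 0) ∨ (∃ j ∈ J, ν j = 0)) ∧
      ∀ x : Fin N → ℝ,
        h x = (I ∪ J).sup' hne fun i => if i ∈ I then x i - μ i else -x i - ν i := by
  haveI : Nonempty (Fin N) := Fin.pos_iff_nonempty.mp hN
  set S : ℕ → ℝ := fun n => Finset.univ.sup' Finset.univ_nonempty fun i => |y n i| with hSdef
  have hSy : ∀ n, (⨆ i, |y n i|) = S n := fun n => (Finset.sup'_univ_eq_ciSup _).symm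
  have hyS : Tendsto S atTop atTop := hy.congr hSy
  set p : ℕ → Fin N → ℝ := fun n i => y n i - S n with hpdef
  set q : ℕ → Fin N → ℝ := fun n i => -y n i - S n with hqdef
  have hyleS : ∀ n i, |y n i| ≤ S n := fun n i =>
    Finset.le_sup' (fun i => |y n i|) (Finset.mem_univ i)
  have hple : ∀ n i, p n i ≤ 0 := fun n i =>
    sub_nonpos.mpr ((le_abs_self _).trans (hyleS n i))
  have hqle : ∀ n i, q n i ≤ 0 := fun n i =>
    sub_nonpos.mpr ((neg_le_abs _).trans (hyleS n i))
  -- extract a subsequence along which p and q converge in EReal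
  obtain ⟨PQ, -, φ, hφ, hPQ⟩ :=
    (isCompact_univ (X := (Fin N → EReal) × (Fin N → EReal))).tendsto_subseq
      (x := fun n => ((fun i => ((p n i : EReal))), (fun i => ((q n i : EReal)))))
      (fun n => Set.mem_univ _)
  set P : Fin N → EReal := PQ.1 with hPdef
  set Q : Fin N → EReal := PQ.2 with hQdef
  have hP : ∀ i, Tendsto (fun n => ((p (φ n) i : EReal))) atTop (𝓝 (P i)) := fun i =>
    (((continuous_apply i).comp continuous_fst).tendsto PQ).comp hPQ
  have hQ : ∀ i, Tendsto (fun n => ((q (φ n) i : EReal))) atTop (𝓝 (Q i)) := fun i =>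
    (((continuous_apply i).comp continuous_snd).tendsto PQ).comp hPQ
  have hφT : Tendsto φ atTop atTop := hφ.tendsto_atTop
  have hP0 : ∀ i, P i ≤ 0 := fun i =>
    le_of_tendsto (hP i) (Eventually.of_forall fun n => by exact_mod_cast hple (φ n) i)
  have hQ0 : ∀ i, Q i ≤ 0 := fun i =>
    le_of_tendsto (hQ i) (Eventually.of_forall fun n => by exact_mod_cast hqle (φ n) i)
  have hPtop : ∀ i, P i ≠ ⊤ := fun i => ((hP0 i).trans_lt (by norm_num)).ne
  have hQtop : ∀ i, Q i ≠ ⊤ := fun i => ((hQ0 i).trans_lt (by norm_num)).ne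
  -- at most one of P i, Q i is finite
  have hbot : ∀ i, P i = ⊥ ∨ Q i = ⊥ := by
    intro i
    by_contra hc
    push_neg at hc
    obtain ⟨hPb, hQb⟩ := hc
    have hPr : Tendsto (fun n => p (φ n) i) atTop (𝓝 (P i).toReal) := by
      have := hP i
      rw [← EReal.coe_toReal (hPtop i) hPb] at this
      exact EReal.tendsto_coe.mp this
    have hQr : Tendsto (fun n => q (φ n) i) atTop (𝓝 (Q i).toReal) := by
      have := hQ i
      rw [← EReal.coe_toReal (hQtop i) hQb] at this
      exact EReal.tendsto_coe.mp this
    have hsum : Tendsto (fun n => p (φ n) i + q (φ n) i) atTop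
        (𝓝 ((P i).toReal + (Q i).toReal)) := hPr.add hQr
    have hS1 : Tendsto (fun n => S (φ n)) atTop atTop := hyS.comp hφT
    have hS2 : Tendsto (fun n => p (φ n) i + q (φ n) i) atTop atBot := by
      have heq : ∀ n, p (φ n) i + q (φ n) i = -(2 * S (φ n)) := fun n => by
        simp only [hpdef, hqdef]; ring
      rw [tendsto_congr heq]
      exact tendsto_neg_atBot_iff.mpr (hS1.const_mul_atTop two_pos)
    exact not_tendsto_atBot_of_tendsto_nhds hsum hS2
  -- the maximum of all P i, Q i is 0
  have key : ∀ n, Finset.univ.sup' Finset.univ_nonempty (fun i => max (p n i) (q n i)) = 0 := by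
    intro n
    have h1 : (fun i : Fin N => max (p n i) (q n i)) = fun i => |y n i| - S n := by
      funext i
      rw [abs_eq_max_neg, ← max_sub_sub_right]
    rw [h1, sup'_sub_const]
    exact sub_self _
  have hmax0 : Finset.univ.sup' Finset.univ_nonempty (fun i => max (P i) (Q i)) = 0 := by
    have ht : Tendsto (fun n => Finset.univ.sup' Finset.univ_nonempty
        (fun i => max ((p (φ n) i : EReal)) ((q (φ n) i : EReal)))) atTop
        (𝓝 (Finset.univ.sup' Finset.univ_nonempty fun i => max (P i) (Q i))) :=
      tendsto_sup'_ereal _ _ _ _ (fun i _ => (hP i).max (hQ i))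
    have hconst : ∀ n, Finset.univ.sup' Finset.univ_nonempty
        (fun i => max ((p (φ n) i : EReal)) ((q (φ n) i : EReal))) = (0 : EReal) := by
      intro n
      have h2 : ∀ i : Fin N, max ((p (φ n) i : EReal)) ((q (φ n) i : EReal))
          = ((max (p (φ n) i) (q (φ n) i) : ℝ) : EReal) :=
        fun i => (EReal.coe_strictMono.monotone.map_max).symm
      rw [Finset.sup'_congr _ rfl (fun i _ => h2 i), ← sup'_coe_ereal, key (φ n)]
      exact EReal.coe_zero
    rw [tendsto_congr hconst] at ht
    exact (tendsto_nhds_unique tendsto_const_nhds ht).symm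
  obtain ⟨i0, -, hi0⟩ := Finset.exists_mem_eq_sup' (Finset.univ_nonempty)
    (fun i => max (P i) (Q i))
  rw [hmax0] at hi0
  -- define the data
  set I : Finset (Fin N) := Finset.univ.filter (fun i => Q i ≠ ⊥) with hIdef
  set J : Finset (Fin N) := Finset.univ.filter (fun i => P i ≠ ⊥) with hJdef
  set μ : Fin N → ℝ := fun i => -(Q i).toReal with hμdef
  set ν : Fin N → ℝ := fun i => -(P i).toReal with hνdef
  have hmemI : ∀ i, i ∈ I ↔ Q i ≠ ⊥ := by intro i; simp [hIdef]
  have hmemJ : ∀ i, i ∈ J ↔ P i ≠ ⊥ := by intro i; simp [hJdef]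
  have hzb : (0 : EReal) ≠ ⊥ := by
    rw [← EReal.coe_zero]; exact EReal.coe_ne_bot 0
  have hdisj : Disjoint I J := by
    rw [Finset.disjoint_left]
    intro i hiI hiJ
    rcases hbot i with hb | hb
    · exact (hmemJ i).mp hiJ hb
    · exact (hmemI i).mp hiI hb
  have hne : (I ∪ J).Nonempty := by
    refine ⟨i0, ?_⟩
    rcases max_eq_iff.mp (hi0.symm) with ⟨hP0', -⟩ | ⟨hQ0', -⟩
    · exact Finset.mem_union_right _ ((hmemJ i0).mpr (by rw [hP0']; exact hzb))
    · exact Finset.mem_union_left _ ((hmemI i0).mpr (by rw [hQ0']; exact hzb))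
  refine ⟨I, J, hne, hdisj, μ, ν, ?_, ?_, ?_, ?_⟩
  · intro i hi
    have hb := (hmemI i).mp hi
    have hle : (Q i).toReal ≤ 0 := by
      have h0 := hQ0 i
      rw [← EReal.coe_toReal (hQtop i) hb] at h0
      exact_mod_cast h0
    simpa [hμdef] using hle
  · intro j hj
    have hb := (hmemJ j).mp hj
    have hle : (P j).toReal ≤ 0 := by
      have h0 := hP0 j
      rw [← EReal.coe_toReal (hPtop j) hb] at h0
      exact_mod_cast h0
    simpa [hνdef] using hle
  · rcases max_eq_iff.mp (hi0.symm) with ⟨hP0', -⟩ | ⟨hQ0', -⟩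
    · exact Or.inr ⟨i0, (hmemJ i0).mpr (by rw [hP0']; exact hzb),
        by simp [hνdef, hP0']⟩
    · exact Or.inl ⟨i0, (hmemI i0).mpr (by rw [hQ0']; exact hzb),
        by simp [hμdef, hQ0']⟩
  -- the formula
  intro x
  set T : ℕ → ℝ := fun n => (⨆ i, |x i - y n i|) - S n with hTdef
  have hTlim : Tendsto (fun n => T (φ n)) atTop (𝓝 (h x)) := by
    have h3 := (hlim x).comp hφT
    refine h3.congr fun n => ?_
    simp only [Function.comp, hTdef, hSy]
  have hTrep : ∀ n, T n = Finset.univ.sup' Finset.univ_nonempty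
      (fun i => max (x i + q n i) (-x i + p n i)) := by
    intro n
    have h1 : (fun i : Fin N => max (x i + q n i) (-x i + p n i))
        = fun i => |x i - y n i| - S n := by
      funext i
      rw [abs_eq_max_neg, ← max_sub_sub_right]
      congr 1 <;> (simp only [hpdef, hqdef]; ring)
    rw [h1, sup'_sub_const, hTdef, Finset.sup'_univ_eq_ciSup]
  set M : Fin N → EReal := fun i => max ((x i : EReal) + Q i) (((-x i : ℝ) : EReal) + P i)
    with hMdef
  have hTe : Tendsto (fun n => ((T (φ n) : ℝ) : EReal)) atTop
      (𝓝 (Finset.univ.sup' Finset.univ_nonempty M)) := by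
    have heq : ∀ n, ((T (φ n) : ℝ) : EReal) = Finset.univ.sup' Finset.univ_nonempty
        (fun i => max ((x i : EReal) + (q (φ n) i : EReal))
          (((-x i : ℝ) : EReal) + (p (φ n) i : EReal))) := by
      intro n
      rw [hTrep (φ n), sup'_coe_ereal]
      refine Finset.sup'_congr _ rfl fun i _ => ?_
      rw [EReal.coe_strictMono.monotone.map_max, EReal.coe_add, EReal.coe_add]
    rw [tendsto_congr heq]
    exact tendsto_sup'_ereal _ _ _ _ fun i _ =>
      (ereal_tendsto_const_add (x i) (hQ i)).max (ereal_tendsto_const_add (-x i) (hP i))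
  have hhx : ((h x : ℝ) : EReal) = Finset.univ.sup' Finset.univ_nonempty M :=
    tendsto_nhds_unique (EReal.tendsto_coe.mpr hTlim) hTe
  set g : Fin N → ℝ := fun i => if i ∈ I then x i - μ i else -x i - ν i with hgdef
  have hMval : ∀ i ∈ I ∪ J, M i = ((g i : ℝ) : EReal) := by
    intro i hi
    rcases Finset.mem_union.mp hi with hiI | hiJ
    · have hQb := (hmemI i).mp hiI
      have hPb : P i = ⊥ := (hbot i).resolve_right hQb
      have hQeq : Q i = ((- μ i : ℝ) : EReal) := by
        rw [hμdef]; simp only [neg_neg]; exact (EReal.coe_toReal (hQtop i) hQb).symm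
      rw [hMdef]
      simp only [hPb, hQeq, EReal.add_bot]
      rw [max_eq_left bot_le, ← EReal.coe_add, hgdef]
      simp only [hiI, if_true, sub_eq_add_neg]
    · have hPb := (hmemJ i).mp hiJ
      have hiI : i ∉ I := Finset.disjoint_right.mp hdisj hiJ
      have hQb : Q i = ⊥ := by
        rcases hbot i with hb | hb
        · exact absurd hb hPb
        · exact hb
      have hPeq : P i = ((- ν i : ℝ) : EReal) := by
        rw [hνdef]; simp only [neg_neg]; exact (EReal.coe_toReal (hPtop i) hPb).symm
      rw [hMdef]
      simp only [hQb, hPeq, EReal.add_bot]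
      rw [max_eq_right bot_le, ← EReal.coe_add, hgdef]
      simp only [hiI, if_false, sub_eq_add_neg]
  have hMbot : ∀ i, i ∉ I ∪ J → M i = ⊥ := by
    intro i hi
    rw [Finset.mem_union, not_or] at hi
    have hQb : Q i = ⊥ := by by_contra hb; exact hi.1 ((hmemI i).mpr hb)
    have hPb : P i = ⊥ := by by_contra hb; exact hi.2 ((hmemJ i).mpr hb)
    simp [hMdef, hQb, hPb, EReal.add_bot]
  have hsup : Finset.univ.sup' Finset.univ_nonempty M
      = (I ∪ J).sup' hne (fun i => ((g i : ℝ) : EReal)) := by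
    apply le_antisymm
    · refine Finset.sup'_le _ _ fun i _ => ?_
      by_cases hi : i ∈ I ∪ J
      · rw [hMval i hi]
        exact Finset.le_sup' (fun j => ((g j : ℝ) : EReal)) hi
      · rw [hMbot i hi]; exact bot_le
    · refine Finset.sup'_le _ _ fun i hi => ?_
      rw [← hMval i hi]
      exact Finset.le_sup' M (Finset.mem_univ i)
  have hfinal : ((h x : ℝ) : EReal) = (((I ∪ J).sup' hne g : ℝ) : EReal) := by
    rw [hhx, hsup, sup'_coe_ereal (I ∪ J) hne g]
  exact_mod_cast hfinal
end

section
/- Let N ≥ 1, 𝒩 = {1,...,N}, let I, J ⊆ 𝒩 be disjoint with I ∪ J ≠ ∅, and let μ ∈ ℝ^I, ν ∈ ℝ^J be nonnegative vectors whose combined minimum is 0. Define h(x) = max( max_{i∈I} (x_i − μ_i), max_{j∈J} (−x_j − ν_j) ) (maxima over empty sets omitted). Then there exists a sequence (y^n) in ℝ^𝒩 with ‖y^n‖_∞ → ∞ such that ‖x − y^n‖_∞ − ‖y^n‖_∞ → h(x) for every x ∈ ℝ^𝒩, and moreover there is no z ∈ ℝ^𝒩 with h(x) = ‖x − z‖_∞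 − ‖z‖_∞ for all x ∈ ℝ^𝒩. -/
open Filter Topology

/-- every `x ↦ max(max_{i ∈ I} (x_i - μ_i), max_{j ∈ J} (-x_j - ν_j))`
(with the stated conditions on `I`, `J`, `μ`, `ν`) is a horofunction of `ℓ^∞(𝒩, ℝ)`. -/
theorem linf_form_is_horofunction (N : ℕ) (hN : 1 ≤ N) (I J : Finset (Fin N))
    (hne : (I ∪ J).Nonempty) (hdisj : Disjoint I J) (μ ν : Fin N → ℝ)
    (hμ : ∀ i ∈ I, 0 ≤ μ i) (hν : ∀ j ∈ J, 0 ≤ ν j)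
    (hmin : (∃ i ∈ I, μ i = 0) ∨ (∃ j ∈ J, ν j = 0)) :
    (∃ y : ℕ → Fin N → ℝ,
      Tendsto (fun n => ⨆ i, |y n i|) atTop atTop ∧
      ∀ x : Fin N → ℝ,
        Tendsto (fun n => (⨆ i, |x i - y n i|) - ⨆ i, |y n i|) atTop
          (𝓝 ((I ∪ J).sup' hne fun i => if i ∈ I then x i - μ i else -x i - ν i))) ∧
    ¬∃ z : Fin N → ℝ, ∀ x : Fin N → ℝ,
      ((I ∪ J).sup' hne fun i => if i ∈ I then x i - μ i else -x i - ν i)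
        = (⨆ i, |x i - z i|) - ⨆ i, |z i| := by
  haveI hNE : Nonempty (Fin N) := Fin.pos_iff_nonempty.mp hN
  -- helper for computing finite ciSup
  have key : ∀ (g : Fin N → ℝ) (c : ℝ), (∀ i, g i ≤ c) → (∃ i, g i = c) →
      (⨆ i, g i) = c := by
    rintro g c h1 ⟨i, h2⟩
    refine le_antisymm (ciSup_le h1) ?_
    rw [← h2]
    exact le_ciSup (Set.Finite.bddAbove (Set.finite_range g)) i
  set H : (Fin N → ℝ) → ℝ :=
    fun x => (I ∪ J).sup' hne fun i => if i ∈ I then x i - μ i else -x i - ν i with hH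
  constructor
  · -- the sequence
    refine ⟨fun n i => if i ∈ I then μ i - n else if i ∈ J then (n : ℝ) - ν i else 0, ?_, ?_⟩
    · -- norm eventually equals n
      have hev : ∀ᶠ n : ℕ in atTop,
          (⨆ i, |if i ∈ I then μ i - n else if i ∈ J then (n : ℝ) - ν i else 0|) = n := by
        have hC : ∀ᶠ n : ℕ in atTop,
            (∑ i : Fin N, (|μ i| + |ν i|)) ≤ (n : ℝ) :=
          tendsto_natCast_atTop_atTop.eventually_ge_atTop _
        filter_upwards [hC] with n hn
        have hCi : ∀ i : Fin N, |μ i| + |ν i| ≤ (n : ℝ) := fun i =>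
          le_trans (Finset.single_le_sum (f := fun i => |μ i| + |ν i|)
            (fun i _ => by positivity) (Finset.mem_univ i)) hn
        refine key _ _ (fun i => ?_) ?_
        · have h1 := hCi i
          have h2 := le_abs_self (μ i)
          have h3 := le_abs_self (ν i)
          have h4 := abs_nonneg (μ i)
          have h5 := abs_nonneg (ν i)
          by_cases hiI : i ∈ I
          · have h6 := hμ i hiI
            rw [if_pos hiI, abs_of_nonpos (by linarith)]
            linarith
          · by_cases hiJ : i ∈ J
            · have h6 := hν i hiJ
              rw [if_neg hiI, if_pos hiJ, abs_of_nonneg (by linarith)]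
              linarith
            · rw [if_neg hiI, if_neg hiJ, abs_zero]
              positivity
        · rcases hmin with ⟨i, hiI, hi0⟩ | ⟨j, hjJ, hj0⟩
          · refine ⟨i, ?_⟩
            rw [if_pos hiI, hi0, zero_sub, abs_neg, abs_of_nonneg (by positivity)]
          · refine ⟨j, ?_⟩
            have hjI : j ∉ I := fun h => (Finset.disjoint_left.mp hdisj h) hjJ
            rw [if_neg hjI, if_pos hjJ, hj0, sub_zero, abs_of_nonneg (by positivity)]
      refine Tendsto.congr' ?_ tendsto_natCast_atTop_atTop
      filter_upwards [hev] with n hn using hn.symm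
    · intro x
      have hev : ∀ᶠ n : ℕ in atTop,
          (⨆ i, |x i - if i ∈ I then μ i - n else if i ∈ J then (n : ℝ) - ν i else 0|)
            - (⨆ i, |if i ∈ I then μ i - n else if i ∈ J then (n : ℝ) - ν i else 0|)
            = H x := by
        have hC : ∀ᶠ n : ℕ in atTop,
            (1 + |H x| + ∑ i : Fin N, (|x i| + |μ i| + |ν i|)) ≤ (n : ℝ) :=
          tendsto_natCast_atTop_atTop.eventually_ge_atTop _
        filter_upwards [hC] with n hn
        have hCi : ∀ i : Fin N, 1 + |H x| + (|x i| + |μ i| + |ν i|) ≤ (n : ℝ) := fun i => by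
          have h := Finset.single_le_sum (f := fun i => |x i| + |μ i| + |ν i|)
            (fun i _ => by positivity) (Finset.mem_univ i)
          linarith
        have hHa := le_abs_self (H x)
        have hHb := neg_abs_le (H x)
        have hH0 := abs_nonneg (H x)
        -- the norm of y n is n
        have hyn : (⨆ i, |if i ∈ I then μ i - n else if i ∈ J then (n : ℝ) - ν i else 0|)
            = n := by
          refine key _ _ (fun i => ?_) ?_
          · have h1 := hCi i
            have h2 := le_abs_self (μ i)
            have h3 := le_abs_self (ν i)
            have h4 := abs_nonneg (μ i)
            have h5 := abs_nonneg (ν i)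
            have h7 := abs_nonneg (x i)
            by_cases hiI : i ∈ I
            · have h6 := hμ i hiI
              rw [if_pos hiI, abs_of_nonpos (by linarith)]
              linarith
            · by_cases hiJ : i ∈ J
              · have h6 := hν i hiJ
                rw [if_neg hiI, if_pos hiJ, abs_of_nonneg (by linarith)]
                linarith
              · rw [if_neg hiI, if_neg hiJ, abs_zero]
                linarith
          · rcases hmin with ⟨i, hiI, hi0⟩ | ⟨j, hjJ, hj0⟩
            · have h1 := hCi i
              have h7 := abs_nonneg (x i)
              have h4 := abs_nonneg (μ i)
              have h5 := abs_nonneg (ν i)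
              refine ⟨i, ?_⟩
              rw [if_pos hiI, hi0, zero_sub, abs_neg, abs_of_nonneg (by linarith)]
            · have h1 := hCi j
              have h7 := abs_nonneg (x j)
              have h4 := abs_nonneg (μ j)
              have h5 := abs_nonneg (ν j)
              refine ⟨j, ?_⟩
              have hjI : j ∉ I := fun h => (Finset.disjoint_left.mp hdisj h) hjJ
              rw [if_neg hjI, if_pos hjJ, hj0, sub_zero, abs_of_nonneg (by linarith)]
        -- the distance is n + H x
        have hd : (⨆ i, |x i - if i ∈ I then μ i - n else if i ∈ J then (n : ℝ) - ν i else 0|)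
            = (n : ℝ) + H x := by
          refine key _ _ (fun i => ?_) ?_
          · have h1 := hCi i
            have h2 := le_abs_self (μ i)
            have h3 := le_abs_self (ν i)
            have h4 := abs_nonneg (μ i)
            have h5 := abs_nonneg (ν i)
            have h7 := le_abs_self (x i)
            have h8 := neg_abs_le (x i)
            by_cases hiI : i ∈ I
            · have hterm : (if i ∈ I then x i - μ i else -x i - ν i) ≤
                  (I ∪ J).sup' hne (fun i => if i ∈ I then x i - μ i else -x i - ν i) :=
                Finset.le_sup' (fun i => if i ∈ I then x i - μ i else -x i - ν i)
                  (Finset.mem_union_left J hiI)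
              rw [if_pos hiI] at hterm
              replace hterm : x i - μ i ≤ H x := hterm
              rw [if_pos hiI, show x i - (μ i - (n:ℝ)) = (n:ℝ) + (x i - μ i) by ring,
                abs_of_nonneg (by linarith)]
              linarith
            · by_cases hiJ : i ∈ J
              · have hterm : (if i ∈ I then x i - μ i else -x i - ν i) ≤
                    (I ∪ J).sup' hne (fun i => if i ∈ I then x i - μ i else -x i - ν i) :=
                  Finset.le_sup' (fun i => if i ∈ I then x i - μ i else -x i - ν i)
                    (Finset.mem_union_right I hiJ)
                rw [if_neg hiI] at hterm
                replace hterm : -x i - ν i ≤ H x := hterm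
                rw [if_neg hiI, if_pos hiJ,
                  show x i - ((n:ℝ) - ν i) = -((n:ℝ) + (-x i - ν i)) by ring, abs_neg,
                  abs_of_nonneg (by linarith)]
                linarith
              · rw [if_neg hiI, if_neg hiJ, sub_zero]
                rcases abs_cases (x i) with ⟨h9, _⟩ | ⟨h9, _⟩ <;> rw [h9] at * <;> linarith
          · obtain ⟨i, hi, hieq⟩ := Finset.exists_mem_eq_sup' hne
              (fun i => if i ∈ I then x i - μ i else -x i - ν i)
            have h1 := hCi i
            have h2 := le_abs_self (μ i)
            have h3 := le_abs_self (ν i)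
            have h4 := abs_nonneg (μ i)
            have h5 := abs_nonneg (ν i)
            have h7 := le_abs_self (x i)
            have h8 := neg_abs_le (x i)
            by_cases hiI : i ∈ I
            · have hval : H x = x i - μ i := by rw [if_pos hiI] at hieq; exact hieq
              refine ⟨i, ?_⟩
              rw [if_pos hiI, show x i - (μ i - (n:ℝ)) = (n:ℝ) + (x i - μ i) by ring,
                abs_of_nonneg (by linarith), hval]
            · have hiJ : i ∈ J := (Finset.mem_union.mp hi).resolve_left hiI
              have hval : H x = -x i - ν i := by rw [if_neg hiI] at hieq; exact hieq
              refine ⟨i, ?_⟩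
              rw [if_neg hiI, if_pos hiJ,
                show x i - ((n:ℝ) - ν i) = -((n:ℝ) + (-x i - ν i)) by ring, abs_neg,
                abs_of_nonneg (by linarith), hval]
        rw [hyn, hd]
        ring
      rw [show ((I ∪ J).sup' hne fun i => if i ∈ I then x i - μ i else -x i - ν i) = H x
        from rfl]
      refine Tendsto.congr' ?_ tendsto_const_nhds
      filter_upwards [hev] with n hn
      exact hn.symm
  · rintro ⟨z, hz⟩
    obtain ⟨i0⟩ := hNE
    have hbz : BddAbove (Set.range fun i => |z i|) :=
      Set.Finite.bddAbove (Set.finite_range _)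
    have hz0 : 0 ≤ ⨆ i, |z i| := le_trans (abs_nonneg _) (le_ciSup hbz i0)
    set c : ℝ := (⨆ i, |z i|) + 1 with hc
    set x : Fin N → ℝ := fun k => if k ∈ I then -c else c with hx
    have h1 : ((I ∪ J).sup' hne fun i => if i ∈ I then x i - μ i else -x i - ν i) ≤ -c := by
      refine Finset.sup'_le _ _ fun i hi => ?_
      by_cases hiI : i ∈ I
      · have := hμ i hiI
        rw [if_pos hiI]
        have hxi : x i = -c := by rw [hx]; simp only [if_pos hiI]
        rw [hxi]
        linarith
      · have hiJ : i ∈ J := (Finset.mem_union.mp hi).resolve_left hiI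
        have := hν i hiJ
        rw [if_neg hiI]
        have hxi : x i = c := by rw [hx]; simp only [if_neg hiI]
        rw [hxi]
        linarith
    have h2 : 0 ≤ ⨆ i, |x i - z i| :=
      le_trans (abs_nonneg _)
        (le_ciSup (f := fun i => |x i - z i|)
          (Set.Finite.bddAbove (Set.finite_range _)) i0)
    have h3 := hz x
    linarith
end

section
/- Let N ≥ 2, 𝒩 = {1,...,N}, and let (y^n) be a sequence in ℝ^𝒩 with ‖y^n‖_var → ∞ as n → ∞, where ‖x‖_var = max_{i∈𝒩} x_i − min_{i∈𝒩} x_i. Then there exist nonempty disjoint proper subsets I, J ⊊ 𝒩, vectors μ ∈ ℝ^I, ν ∈ ℝ^J with nonnegative entries satisfying min_{i∈I} μ_i = 0 and min_{j∈J} ν_j = 0, and a subsequence (y^{n_k}) such that for every x ∈ ℝ^𝒩, the values ‖x − y^{n_k}‖_var − ‖y^{n_k}‖_var converge as k → ∞ to h(x) = max_{i∈I} (x_i − μ_i) − min_{j∈J} (x_j + ν_j). -/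
/-!
Normalise `y` from both ends: `aboveMin y i = y i - min y` and `belowMax y i = max y - y i` are
nonnegative, vanish somewhere, and add up to `‖y‖_var`, while
`‖x - y‖_var - ‖y‖_var = max_i (x i - aboveMin y i) - min_i (x i + belowMax y i)`.
By compactness of `[0, ∞]^𝒩 × [0, ∞]^𝒩`, along a subsequence both normalisations converge
coordinatewise in `[0, ∞]`. As their sum diverges, at every coordinate one of the two limits is
`∞`, so the sets `I`, `J` where they are finite are disjoint; they are nonempty because the limits
vanish somewhere. Coordinates outside `I` drop out of the maximum and coordinates outside `J` out
of the minimum, which leaves `h` with `μ`, `ν` the finite limits.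
-/

open Filter Topology ENNReal

section FiniteSupremum

variable {α ι β : Type*}

theorem ciSup_sub_const [Nonempty ι] [ConditionallyCompleteLattice α] [AddGroup α]
    [AddRightMono α] {f : ι → α} (hf : BddAbove (Set.range f)) (c : α) :
    ⨆ i, (f i - c) = (⨆ i, f i) - c := by
  simpa only [sub_eq_add_neg, OrderIso.addRight_apply] using
    ((OrderIso.addRight (-c)).map_ciSup hf).symm

theorem ciInf_sub_const [Nonempty ι] [ConditionallyCompleteLattice α] [AddGroup α]
    [AddRightMono α] {f : ι → α} (hf : BddBelow (Set.range f)) (c : α) :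
    ⨅ i, (f i - c) = (⨅ i, f i) - c := by
  simpa only [sub_eq_add_neg, OrderIso.addRight_apply] using
    ((OrderIso.addRight (-c)).map_ciInf hf).symm

variable [ConditionallyCompleteLinearOrder α] [TopologicalSpace α] [OrderTopology α] [Finite ι]
  {l : Filter β} {f : β → ι → α} {s : Finset ι} {c : ι → α}

theorem tendsto_ciSup_of_tendsto_atBot (hs : s.Nonempty)
    (hc : ∀ i ∈ s, Tendsto (fun b => f b i) l (𝓝 (c i)))
    (hbot : ∀ i ∉ s, Tendsto (fun b => f b i) l atBot) :
    Tendsto (fun b => ⨆ i, f b i) l (𝓝 (s.sup' hs c)) := by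
  have : Nonempty ι := ⟨hs.choose⟩
  refine tendsto_order.2 ⟨fun a ha => ?_, fun a ha => ?_⟩
  · obtain ⟨i, hi, hai⟩ := (Finset.lt_sup'_iff hs).1 ha
    filter_upwards [(hc i hi).eventually (lt_mem_nhds hai)] with b hb
    exact hb.trans_le (le_ciSup (Finite.bddAbove_range _) i)
  · have hlt (i : ι) : ∀ᶠ b in l, f b i < a := by
      by_cases hi : i ∈ s
      · exact (hc i hi).eventually (gt_mem_nhds ((Finset.le_sup' c hi).trans_lt ha))
      · filter_upwards [tendsto_atBot.1 (hbot i hi) (s.sup' hs c)] with b hb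
        exact hb.trans_lt ha
    filter_upwards [eventually_all.2 hlt] with b hb
    obtain ⟨i, hi⟩ := exists_eq_ciSup_of_finite (f := f b)
    exact hi ▸ hb i

theorem tendsto_ciInf_of_tendsto_atTop (hs : s.Nonempty)
    (hc : ∀ i ∈ s, Tendsto (fun b => f b i) l (𝓝 (c i)))
    (htop : ∀ i ∉ s, Tendsto (fun b => f b i) l atTop) :
    Tendsto (fun b => ⨅ i, f b i) l (𝓝 (s.inf' hs c)) :=
  tendsto_ciSup_of_tendsto_atBot (α := αᵒᵈ) hs hc htop

end FiniteSupremum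

section ExtendedLimits

variable {ι β : Type*} {l : Filter β}

theorem exists_subseq_tendsto_ofReal [Finite ι] (u v : ℕ → ι → ℝ) :
    ∃ φ : ℕ → ℕ, StrictMono φ ∧ ∃ L K : ι → ℝ≥0∞,
      (∀ i, Tendsto (fun k => ENNReal.ofReal (u (φ k) i)) atTop (𝓝 (L i))) ∧
      ∀ i, Tendsto (fun k => ENNReal.ofReal (v (φ k) i)) atTop (𝓝 (K i)) := by
  obtain ⟨⟨L, K⟩, φ, hφ, h⟩ := CompactSpace.tendsto_subseq fun n =>
    ((fun i => ENNReal.ofReal (u n i), fun i => ENNReal.ofReal (v n i)) :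
      (ι → ℝ≥0∞) × (ι → ℝ≥0∞))
  exact ⟨φ, hφ, L, K, tendsto_pi_nhds.1 ((continuous_fst.tendsto _).comp h),
    tendsto_pi_nhds.1 ((continuous_snd.tendsto _).comp h)⟩

theorem exists_apply_eq_of_tendsto_of_frequently {X : Type*} [TopologicalSpace X] [T1Space X]
    [Finite ι] {u : β → ι → X} {L : ι → X}
    (h : ∀ i, Tendsto (fun b => u b i) l (𝓝 (L i))) {a : X}
    (hu : ∃ᶠ b in l, ∃ i, u b i = a) : ∃ i, L i = a := by
  by_contra! hne
  obtain ⟨b, ⟨i, hi⟩, hb⟩ :=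
    (hu.and_eventually (eventually_all.2 fun i => (h i).eventually_ne (hne i))).exists
  exact hb i hi

theorem add_eq_top_of_tendsto_ofReal [l.NeBot] {u v : β → ℝ} (hu : ∀ b, 0 ≤ u b)
    (hv : ∀ b, 0 ≤ v b) (huv : Tendsto (fun b => u b + v b) l atTop) {a c : ℝ≥0∞}
    (ha : Tendsto (fun b => ENNReal.ofReal (u b)) l (𝓝 a))
    (hc : Tendsto (fun b => ENNReal.ofReal (v b)) l (𝓝 c)) : a + c = ∞ := by
  refine tendsto_nhds_unique (ha.add hc) ?_
  simpa only [ENNReal.ofReal_add (hu _) (hv _)] using tendsto_ofReal_nhds_top.2 huv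

theorem tendsto_toReal_of_tendsto_ofReal {u : β → ℝ} (hu : ∀ b, 0 ≤ u b) {a : ℝ≥0∞}
    (ha : a ≠ ∞) (h : Tendsto (fun b => ENNReal.ofReal (u b)) l (𝓝 a)) :
    Tendsto u l (𝓝 a.toReal) :=
  ((ENNReal.tendsto_toReal ha).comp h).congr fun b => ENNReal.toReal_ofReal (hu b)

theorem inf'_toReal_eq_zero {L : ι → ℝ≥0∞} {s : Finset ι} (hs : s.Nonempty) {i : ι}
    (hi : i ∈ s) (hLi : L i = 0) : s.inf' hs (fun j => (L j).toReal) = 0 :=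
  le_antisymm (Finset.inf'_le_of_le _ hi (by simp [hLi]))
    (Finset.le_inf' _ _ fun _ _ => toReal_nonneg)

variable [Fintype ι] {u : β → ι → ℝ} {L : ι → ℝ≥0∞}

theorem tendsto_ciSup_sub_of_tendsto_ofReal (hu : ∀ b i, 0 ≤ u b i)
    (hL : ∀ i, Tendsto (fun b => ENNReal.ofReal (u b i)) l (𝓝 (L i))) (x : ι → ℝ)
    (hs : {i | L i ≠ ∞}.toFinset.Nonempty) :
    Tendsto (fun b => ⨆ i, (x i - u b i)) l
      (𝓝 ({i | L i ≠ ∞}.toFinset.sup' hs fun i => x i - (L i).toReal)) := by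
  refine tendsto_ciSup_of_tendsto_atBot hs (fun i hi => ?_) fun i hi => ?_
  · refine tendsto_const_nhds.sub (tendsto_toReal_of_tendsto_ofReal (hu · i) ?_ (hL i))
    simpa using hi
  · have hLi : L i = ∞ := by simpa using hi
    simpa only [sub_eq_add_neg, Function.comp_def] using tendsto_atBot_add_const_left l (x i)
      (tendsto_neg_atTop_atBot.comp (tendsto_ofReal_nhds_top.1 (hLi ▸ hL i)))

theorem tendsto_ciInf_add_of_tendsto_ofReal (hu : ∀ b i, 0 ≤ u b i)
    (hL : ∀ i, Tendsto (fun b => ENNReal.ofReal (u b i)) l (𝓝 (L i))) (x : ι → ℝ)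
    (hs : {i | L i ≠ ∞}.toFinset.Nonempty) :
    Tendsto (fun b => ⨅ i, (x i + u b i)) l
      (𝓝 ({i | L i ≠ ∞}.toFinset.inf' hs fun i => x i + (L i).toReal)) := by
  refine tendsto_ciInf_of_tendsto_atTop hs (fun i hi => ?_) fun i hi => ?_
  · refine tendsto_const_nhds.add (tendsto_toReal_of_tendsto_ofReal (hu · i) ?_ (hL i))
    simpa using hi
  · have hLi : L i = ∞ := by simpa using hi
    exact tendsto_atTop_add_const_left l (x i) (tendsto_ofReal_nhds_top.1 (hLi ▸ hL i))

variable {K : ι → ℝ≥0∞}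

theorem disjoint_toFinset_ne_top (hLK : ∀ i, L i + K i = ∞) :
    Disjoint {i | L i ≠ ∞}.toFinset {i | K i ≠ ∞}.toFinset :=
  Finset.disjoint_left.2 fun i hL hK => by
    simp only [Set.mem_toFinset, Set.mem_ofPred_eq] at hL hK
    exact ENNReal.add_ne_top.2 ⟨hL, hK⟩ (hLK i)

end ExtendedLimits

noncomputable section VarNorm

variable {ι : Type*}

def varNorm (x : ι → ℝ) : ℝ := (⨆ i, x i) - ⨅ i, x i

def aboveMin (y : ι → ℝ) (i : ι) : ℝ := y i - ⨅ j, y j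

def belowMax (y : ι → ℝ) (i : ι) : ℝ := (⨆ j, y j) - y i

theorem aboveMin_add_belowMax (y : ι → ℝ) (i : ι) :
    aboveMin y i + belowMax y i = varNorm y := by
  unfold aboveMin belowMax varNorm
  ring

theorem nonempty_of_tendsto_varNorm {β : Type*} {l : Filter β} [l.NeBot] {y : β → ι → ℝ}
    (hy : Tendsto (fun b => varNorm (y b)) l atTop) : Nonempty ι := by
  by_contra hι
  rw [not_nonempty_iff] at hι
  simp only [varNorm, Real.iSup_of_isEmpty, Real.iInf_of_isEmpty, sub_zero] at hy
  exact not_tendsto_const_atTop _ _ hy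

variable [Finite ι] (y : ι → ℝ)

theorem aboveMin_nonneg (i : ι) : 0 ≤ aboveMin y i :=
  sub_nonneg.2 (ciInf_le (Finite.bddBelow_range y) i)

theorem belowMax_nonneg (i : ι) : 0 ≤ belowMax y i :=
  sub_nonneg.2 (le_ciSup (Finite.bddAbove_range y) i)

variable [Nonempty ι]

theorem exists_aboveMin_eq_zero : ∃ i, aboveMin y i = 0 :=
  (exists_eq_ciInf_of_finite (f := y)).imp fun _ hi => sub_eq_zero.2 hi

theorem exists_belowMax_eq_zero : ∃ i, belowMax y i = 0 :=
  (exists_eq_ciSup_of_finite (f := y)).imp fun _ hi => sub_eq_zero.2 hi.symm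

theorem varNorm_sub_sub_varNorm (x : ι → ℝ) :
    varNorm (x - y) - varNorm y = (⨆ i, (x i - aboveMin y i)) - ⨅ i, (x i + belowMax y i) := by
  have hsup : ⨆ i, (x - y) i = (⨆ i, (x i - aboveMin y i)) - ⨅ j, y j := by
    rw [← ciSup_sub_const (Finite.bddAbove_range _)]
    simp only [Pi.sub_apply, aboveMin]
    ring_nf
  have hinf : ⨅ i, (x - y) i = (⨅ i, (x i + belowMax y i)) - ⨆ j, y j := by
    rw [← ciInf_sub_const (Finite.bddBelow_range _)]
    simp only [Pi.sub_apply, belowMax]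
    ring_nf
  rw [varNorm, hsup, hinf, varNorm]
  ring

end VarNorm

theorem lvar_horofunction_subsequence_general (N : ℕ) (y : ℕ → Fin N → ℝ)
    (hy : Tendsto (fun n => (⨆ i, y n i) - ⨅ i, y n i) atTop atTop) :
    ∃ I J : Finset (Fin N), ∃ hI : I.Nonempty, ∃ hJ : J.Nonempty,
      Disjoint I J ∧ I ⊂ Finset.univ ∧ J ⊂ Finset.univ ∧
    ∃ μ ν : Fin N → ℝ,
      (∀ i ∈ I, 0 ≤ μ i) ∧ (∀ j ∈ J, 0 ≤ ν j) ∧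
      I.inf' hI μ = 0 ∧ J.inf' hJ ν = 0 ∧
    ∃ φ : ℕ → ℕ, StrictMono φ ∧
      ∀ x : Fin N → ℝ,
        Tendsto (fun k =>
            ((⨆ i, (x i - y (φ k) i)) - ⨅ i, (x i - y (φ k) i))
              - ((⨆ i, y (φ k) i) - ⨅ i, y (φ k) i)) atTop
          (𝓝 (I.sup' hI (fun i => x i - μ i) - J.inf' hJ (fun j => x j + ν j))) := by
  have : Nonempty (Fin N) := nonempty_of_tendsto_varNorm hy
  obtain ⟨φ, hφ, L, K, hL, hK⟩ :=
    exists_subseq_tendsto_ofReal (fun n => aboveMin (y n)) (fun n => belowMax (y n))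
  have hvar : Tendsto (fun k => varNorm (y (φ k))) atTop atTop := hy.comp hφ.tendsto_atTop
  have hLK (i : Fin N) : L i + K i = ∞ :=
    add_eq_top_of_tendsto_ofReal (fun _ => aboveMin_nonneg _ i) (fun _ => belowMax_nonneg _ i)
      (by simpa only [aboveMin_add_belowMax] using hvar) (hL i) (hK i)
  obtain ⟨i₀, hi₀⟩ := exists_apply_eq_of_tendsto_of_frequently hL <| .of_forall fun k =>
    (exists_aboveMin_eq_zero (y (φ k))).imp fun _ h => by rw [h, ofReal_zero]
  obtain ⟨j₀, hj₀⟩ := exists_apply_eq_of_tendsto_of_frequently hK <| .of_forall fun k =>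
    (exists_belowMax_eq_zero (y (φ k))).imp fun _ h => by rw [h, ofReal_zero]
  have hi₀I : i₀ ∈ {i | L i ≠ ∞}.toFinset := by simp [hi₀]
  have hj₀J : j₀ ∈ {j | K j ≠ ∞}.toFinset := by simp [hj₀]
  have hI : {i | L i ≠ ∞}.toFinset.Nonempty := ⟨i₀, hi₀I⟩
  have hJ : {j | K j ≠ ∞}.toFinset.Nonempty := ⟨j₀, hj₀J⟩
  have hIJ := disjoint_toFinset_ne_top hLK
  refine ⟨_, _, hI, hJ, hIJ, Finset.ssubset_univ_iff.2 (hIJ.symm.ne_top_of_ne_bot hJ.ne_empty),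
    Finset.ssubset_univ_iff.2 (hIJ.ne_top_of_ne_bot hI.ne_empty), fun i => (L i).toReal,
    fun j => (K j).toReal, fun _ _ => toReal_nonneg, fun _ _ => toReal_nonneg,
    inf'_toReal_eq_zero _ hi₀I hi₀, inf'_toReal_eq_zero _ hj₀J hj₀, φ, hφ, fun x => ?_⟩
  exact ((tendsto_ciSup_sub_of_tendsto_ofReal (fun _ => aboveMin_nonneg _) hL x hI).sub
    (tendsto_ciInf_add_of_tendsto_ofReal (fun _ => belowMax_nonneg _) hK x hJ)).congr fun k =>
    (varNorm_sub_sub_varNorm (y (φ k)) x).symm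

/-- Lemma 6.1 of the paper, for the variation pseudo-norm
`‖x‖_var = max_i x_i - min_i x_i` on `ℝ^𝒩`. -/
theorem lvar_horofunction_subsequence (N : ℕ) (hN : 2 ≤ N) (y : ℕ → Fin N → ℝ)
    (hy : Tendsto (fun n => (⨆ i, y n i) - ⨅ i, y n i) atTop atTop) :
    ∃ I J : Finset (Fin N), ∃ hI : I.Nonempty, ∃ hJ : J.Nonempty,
      Disjoint I J ∧ I ⊂ Finset.univ ∧ J ⊂ Finset.univ ∧
    ∃ μ ν : Fin N → ℝ,
      (∀ i ∈ I, 0 ≤ μ i) ∧ (∀ j ∈ J, 0 ≤ ν j) ∧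
      I.inf' hI μ = 0 ∧ J.inf' hJ ν = 0 ∧
    ∃ φ : ℕ → ℕ, StrictMono φ ∧
      ∀ x : Fin N → ℝ,
        Tendsto (fun k =>
            ((⨆ i, (x i - y (φ k) i)) - ⨅ i, (x i - y (φ k) i))
              - ((⨆ i, y (φ k) i) - ⨅ i, y (φ k) i)) atTop
          (𝓝 (I.sup' hI (fun i => x i - μ i) - J.inf' hJ (fun j => x j + ν j))) :=
  lvar_horofunction_subsequence_general N y hy
end

section
/- Let N ≥ 2, 𝒩 = {1,...,N}, and suppose h : ℝ^𝒩 → ℝ is the pointwise limit of the functions x ↦ ‖x − y^n‖_var − ‖y^n‖_var for some sequence (y^n) in ℝ^𝒩 with ‖y^n‖_var → ∞. Then there exist nonempty disjoint proper subsets I, J ⊊ 𝒩 and nonnegative vectors μ ∈ ℝ^I, ν ∈ ℝ^J with min_{i∈I} μ_i = 0 and min_{j∈J} ν_j = 0 such that h(x) = max_{i∈I} (x_i − μ_i) − min_{j∈J} (x_j + ν_j) for all x ∈ ℝ^𝒩. -/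
/-!
Write `p = y - min y` and `q = max y - y`: both are nonnegative, `p i + q i = ‖y‖_var`, and
`τ_var(y)(x) = max_i (x i - p i) - min_i (x i + q i)`. Along a subsequence every coordinate of
`p` and `q` converges in `[0, ∞]`. As `p i + q i → ∞`, no index has both limits finite; `I` and
`J` are the indices where `p`, resp. `q`, has a finite limit `μ`, resp. `ν`. Coordinates tending
to infinity drop out of the max and the min, and `min p = min q = 0` passes to the limit, which
makes `I` and `J` nonempty (hence proper, being disjoint).
-/

open Filter Topology Finset

section FinsetSupLimits

variable {ι α β : Type*} [Fintype ι] [Nonempty ι] [LinearOrder α] [TopologicalSpace α]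
  [OrderTopology α] {l : Filter β} {s : Finset ι} {f : β → ι → α} {g : ι → α}

theorem tendsto_sup'_univ_of_tendsto_atBot [NoMinOrder α] (hs : s.Nonempty)
    (hf : ∀ i ∈ s, Tendsto (f · i) l (𝓝 (g i))) (hbot : ∀ i ∉ s, Tendsto (f · i) l atBot) :
    Tendsto (fun b => univ.sup' univ_nonempty (f b)) l (𝓝 (s.sup' hs g)) := by
  have hlim := Tendsto.finset_sup'_nhds_apply hs hf
  obtain ⟨c, hc⟩ := exists_lt (s.sup' hs g)
  have hsmall : ∀ᶠ b in l, ∀ i, i ∉ s → f b i ≤ c := by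
    refine eventually_all.2 fun i => ?_
    by_cases hi : i ∈ s
    · exact Eventually.of_forall fun _ hi' => absurd hi hi'
    · exact ((hbot i hi).eventually_le_atBot c).mono fun _ h _ => h
  refine hlim.congr' ?_
  filter_upwards [hsmall, hlim.eventually (eventually_gt_nhds hc)] with b hb hgt
  refine le_antisymm (sup'_mono _ (subset_univ s) hs) (sup'_le _ _ fun i _ => ?_)
  by_cases hi : i ∈ s
  · exact le_sup' _ hi
  · exact (hb i hi).trans hgt.le

theorem tendsto_inf'_univ_of_tendsto_atTop [NoMaxOrder α] (hs : s.Nonempty)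
    (hf : ∀ i ∈ s, Tendsto (f · i) l (𝓝 (g i))) (htop : ∀ i ∉ s, Tendsto (f · i) l atTop) :
    Tendsto (fun b => univ.inf' univ_nonempty (f b)) l (𝓝 (s.inf' hs g)) :=
  tendsto_sup'_univ_of_tendsto_atBot (α := αᵒᵈ) hs hf htop

end FinsetSupLimits

section Variation

variable {ι : Type*}

/-- The paper's `‖y‖_var`. -/
noncomputable def variation (y : ι → ℝ) : ℝ := (⨆ i, y i) - ⨅ i, y i

noncomputable def lowerGap (y : ι → ℝ) (i : ι) : ℝ := y i - ⨅ k, y k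

noncomputable def upperGap (y : ι → ℝ) (i : ι) : ℝ := (⨆ k, y k) - y i

theorem lowerGap_add_upperGap (y : ι → ℝ) (i : ι) :
    lowerGap y i + upperGap y i = variation y := by
  unfold lowerGap upperGap variation; ring

section Finite

variable [Finite ι]

theorem lowerGap_nonneg (y : ι → ℝ) (i : ι) : 0 ≤ lowerGap y i :=
  sub_nonneg.2 (ciInf_le (Finite.bddBelow_range y) i)

theorem upperGap_nonneg (y : ι → ℝ) (i : ι) : 0 ≤ upperGap y i :=
  sub_nonneg.2 (le_ciSup (Finite.bddAbove_range y) i)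

variable [Nonempty ι]

theorem exists_lowerGap_eq_zero (y : ι → ℝ) : ∃ i, lowerGap y i = 0 :=
  exists_eq_ciInf_of_finite.imp fun _ h => sub_eq_zero.2 h

theorem exists_upperGap_eq_zero (y : ι → ℝ) : ∃ i, upperGap y i = 0 :=
  exists_eq_ciSup_of_finite.imp fun _ h => sub_eq_zero.2 h.symm

end Finite

theorem variation_sub_sub_variation [Fintype ι] [Nonempty ι] (x y : ι → ℝ) :
    variation (x - y) - variation y = univ.sup' univ_nonempty (fun i => x i - lowerGap y i)
      - univ.inf' univ_nonempty (fun i => x i + upperGap y i) := by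
  have hsup : univ.sup' univ_nonempty (fun i => x i - lowerGap y i)
      = (⨆ i, (x - y) i) + ⨅ k, y k := by
    rw [← sup'_univ_eq_ciSup, sup'_add]
    exact sup'_congr _ rfl fun i _ => by simp only [lowerGap, Pi.sub_apply]; ring
  have hinf : univ.inf' univ_nonempty (fun i => x i + upperGap y i)
      = (⨅ i, (x - y) i) + ⨆ k, y k := by
    rw [← inf'_univ_eq_ciInf, ← OrderIso.addRight_apply, map_finset_inf']
    refine inf'_congr _ rfl fun i _ => ?_
    simp only [upperGap, Pi.sub_apply, Function.comp_apply, OrderIso.addRight_apply]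
    ring
  rw [hsup, hinf, variation, variation]; ring

end Variation

section Extraction

variable {ι : Type*}

theorem exists_strictMono_tendsto_nhds_or_tendsto_atTop [Fintype ι] (u : ℕ → ι → ℝ)
    (hu : ∀ n i, 0 ≤ u n i) :
    ∃ φ : ℕ → ℕ, StrictMono φ ∧ ∃ S : Finset ι, ∃ μ : ι → ℝ, (∀ i, 0 ≤ μ i) ∧
      (∀ i ∈ S, Tendsto (fun n => u (φ n) i) atTop (𝓝 (μ i))) ∧
      ∀ i ∉ S, Tendsto (fun n => u (φ n) i) atTop atTop := by
  classical
  obtain ⟨L, φ, hφ, hL⟩ := CompactSpace.tendsto_subseq fun n i => ENNReal.ofReal (u n i)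
  have hLi : ∀ i, Tendsto (fun n => ENNReal.ofReal (u (φ n) i)) atTop (𝓝 (L i)) :=
    tendsto_pi_nhds.1 hL
  refine ⟨φ, hφ, univ.filter (L · ≠ ⊤), fun i => (L i).toReal, fun i => ENNReal.toReal_nonneg,
    fun i hi => ?_, fun i hi => ?_⟩
  · refine ((ENNReal.tendsto_toReal (mem_filter.1 hi).2).comp (hLi i)).congr fun n => ?_
    exact ENNReal.toReal_ofReal (hu _ _)
  · have hLtop : L i = ⊤ := by simpa using hi
    exact ENNReal.tendsto_ofReal_nhds_top.1 (hLtop ▸ hLi i)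

theorem exists_mem_eq_zero_of_tendsto [Finite ι] {u : ℕ → ι → ℝ} {S : Finset ι} {μ : ι → ℝ}
    (hS : ∀ i ∈ S, Tendsto (u · i) atTop (𝓝 (μ i)))
    (hSc : ∀ i ∉ S, Tendsto (u · i) atTop atTop) (hzero : ∀ n, ∃ i, u n i = 0) :
    ∃ i ∈ S, μ i = 0 := by
  choose c hc using hzero
  obtain ⟨i, hi⟩ := Finite.exists_infinite_fiber c
  have hfreq : ∃ᶠ n in atTop, u n i = 0 :=
    (Nat.frequently_atTop_iff_infinite.2 (Set.infinite_coe_iff.1 hi)).mono fun n hn =>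
      (congrArg _ hn).symm.trans (hc n)
  by_cases hiS : i ∈ S
  · exact ⟨i, hiS, tendsto_nhds_unique_of_frequently_eq (hS i hiS) tendsto_const_nhds hfreq⟩
  · obtain ⟨n, hn0, hnpos⟩ := (hfreq.and_eventually ((hSc i hiS).eventually_gt_atTop 0)).exists
    exact absurd hnpos hn0.not_gt

end Extraction

/-- every pointwise limit of `τ_var(yⁿ)` with `‖yⁿ‖_var → ∞` has
the form `x ↦ max_{i ∈ I} (x_i - μ_i) - min_{j ∈ J} (x_j + ν_j)`. -/
theorem lvar_horofunction_form (N : ℕ) (hN : 2 ≤ N) (h : (Fin N → ℝ) → ℝ)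
    (y : ℕ → Fin N → ℝ)
    (hy : Tendsto (fun n => (⨆ i, y n i) - ⨅ i, y n i) atTop atTop)
    (hlim : ∀ x : Fin N → ℝ,
      Tendsto (fun n =>
          ((⨆ i, (x i - y n i)) - ⨅ i, (x i - y n i))
            - ((⨆ i, y n i) - ⨅ i, y n i)) atTop (𝓝 (h x))) :
    ∃ I J : Finset (Fin N), ∃ hI : I.Nonempty, ∃ hJ : J.Nonempty,
      Disjoint I J ∧ I ⊂ Finset.univ ∧ J ⊂ Finset.univ ∧
    ∃ μ ν : Fin N → ℝ,
      (∀ i ∈ I, 0 ≤ μ i) ∧ (∀ j ∈ J, 0 ≤ ν j) ∧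
      I.inf' hI μ = 0 ∧ J.inf' hJ ν = 0 ∧
      ∀ x : Fin N → ℝ,
        h x = I.sup' hI (fun i => x i - μ i) - J.inf' hJ (fun j => x j + ν j) := by
  have : Nonempty (Fin N) := ⟨⟨0, by omega⟩⟩
  obtain ⟨φ, hφ, I, μ, hμ, hpI, hpIc⟩ :=
    exists_strictMono_tendsto_nhds_or_tendsto_atTop _ fun n => lowerGap_nonneg (y n)
  obtain ⟨ψ, hψ, J, ν, hν, hqJ, hqJc⟩ :=
    exists_strictMono_tendsto_nhds_or_tendsto_atTop _ fun n => upperGap_nonneg (y (φ n))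
  replace hpI := fun i hi => (hpI i hi).comp hψ.tendsto_atTop
  replace hpIc := fun i hi => (hpIc i hi).comp hψ.tendsto_atTop
  have hφψ : Tendsto (φ ∘ ψ) atTop atTop := (hφ.comp hψ).tendsto_atTop
  obtain ⟨i₀, hi₀, hμi₀⟩ :=
    exists_mem_eq_zero_of_tendsto hpI hpIc fun n => exists_lowerGap_eq_zero _
  obtain ⟨j₀, hj₀, hνj₀⟩ :=
    exists_mem_eq_zero_of_tendsto hqJ hqJc fun n => exists_upperGap_eq_zero _
  have hdisj : Disjoint I J := disjoint_left.2 fun i hiI hiJ =>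
    not_tendsto_nhds_of_tendsto_atTop (hy.comp hφψ) _
      (((hpI i hiI).add (hqJ i hiJ)).congr fun n => lowerGap_add_upperGap _ i)
  refine ⟨I, J, ⟨i₀, hi₀⟩, ⟨j₀, hj₀⟩, hdisj,
    ssubset_univ_iff.2 fun hI => disjoint_left.1 hdisj (hI ▸ mem_univ j₀) hj₀,
    ssubset_univ_iff.2 fun hJ => disjoint_right.1 hdisj (hJ ▸ mem_univ i₀) hi₀,
    μ, ν, fun i _ => hμ i, fun j _ => hν j,
    le_antisymm ((inf'_le _ hi₀).trans_eq hμi₀) (le_inf' _ _ fun i _ => hμ i),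
    le_antisymm ((inf'_le _ hj₀).trans_eq hνj₀) (le_inf' _ _ fun j _ => hν j), fun x => ?_⟩
  have hsup := tendsto_sup'_univ_of_tendsto_atBot ⟨i₀, hi₀⟩
    (fun i hi => (hpI i hi).const_sub (x i))
    (fun i hi => tendsto_atBot_add_const_left _ (x i) (tendsto_neg_atTop_atBot.comp (hpIc i hi)))
  have hinf := tendsto_inf'_univ_of_tendsto_atTop ⟨j₀, hj₀⟩
    (fun j hj => (hqJ j hj).const_add (x j))
    (fun j hj => tendsto_atTop_add_const_left _ (x j) (hqJc j hj))
  refine tendsto_nhds_unique ((hlim x).comp hφψ) ?_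
  exact (hsup.sub hinf).congr fun n => (variation_sub_sub_variation x _).symm
end

section
/- Let N ≥ 2, 𝒩 = {1,...,N}, let I, J ⊊ 𝒩 be nonempty disjoint subsets, and let μ ∈ ℝ^I, ν ∈ ℝ^J be nonnegative vectors with min_{i∈I} μ_i = 0 and min_{j∈J} ν_j = 0. Define h(x) = max_{i∈I} (x_i − μ_i) − min_{j∈J} (x_j + ν_j). Then there exists a sequence (y^n) in ℝ^𝒩 with ‖y^n‖_var → ∞ such that ‖x − y^n‖_var − ‖y^n‖_var → h(x) for every x ∈ ℝ^𝒩, and moreover there is no z ∈ ℝ^𝒩 with h(x) = ‖x − z‖_var − ‖z‖_var for all x ∈ ℝ^𝒩. -/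
open Filter Topology

/-- Auxiliary sequence for the horofunction construction. -/
def lvarY {N : ℕ} (I J : Finset (Fin N)) (μ ν : Fin N → ℝ) (n : ℕ) (i : Fin N) : ℝ :=
  if i ∈ I then μ i - n else if i ∈ J then (n : ℝ) - ν i else 0

private lemma lvar_master {N : ℕ} (hN : 0 < N) (I J : Finset (Fin N)) (hI : I.Nonempty)
    (hJ : J.Nonempty) (hdisj : Disjoint I J) (μ ν x : Fin N → ℝ) :
    ∃ M : ℝ, ∀ n : ℕ, M ≤ (n : ℝ) →
      (⨆ i, (x i - lvarY I J μ ν n i)) = (n : ℝ) + I.sup' hI (fun i => x i - μ i) ∧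
      (⨅ i, (x i - lvarY I J μ ν n i)) = -(n : ℝ) + J.inf' hJ (fun j => x j + ν j) := by
  haveI : Nonempty (Fin N) := ⟨⟨0, hN⟩⟩
  set A := I.sup' hI (fun i => x i - μ i) with hA
  set B := J.inf' hJ (fun j => x j + ν j) with hB
  refine ⟨Finset.univ.sup' Finset.univ_nonempty (fun k => |x k| + |μ k| + |ν k|)
      + |A| + |B|, ?_⟩
  intro n hn
  have hn0 : (0 : ℝ) ≤ n := Nat.cast_nonneg n
  have hS : ∀ k, |x k| + |μ k| + |ν k| + |A| + |B| ≤ (n : ℝ) := by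
    intro k
    have := Finset.le_sup' (fun k => |x k| + |μ k| + |ν k|) (Finset.mem_univ k)
    linarith
  constructor
  · rw [← Finset.sup'_univ_eq_ciSup]
    apply le_antisymm
    · apply Finset.sup'_le
      intro k _
      by_cases hkI : k ∈ I
      · have h1 : x k - μ k ≤ A := Finset.le_sup' (fun i => x i - μ i) hkI
        simp only [lvarY, if_pos hkI]
        linarith
      · by_cases hkJ : k ∈ J
        · simp only [lvarY, if_neg hkI, if_pos hkJ]
          have h2 := hS k
          have h3 := le_abs_self (x k)
          have h4 := le_abs_self (ν k)
          have h5 := neg_abs_le A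
          have h6 := abs_nonneg (μ k)
          have h7 := abs_nonneg B
          linarith
        · simp only [lvarY, if_neg hkI, if_neg hkJ]
          have h2 := hS k
          have h3 := le_abs_self (x k)
          have h5 := neg_abs_le A
          have h6 := abs_nonneg (μ k)
          have h6' := abs_nonneg (ν k)
          have h7 := abs_nonneg B
          linarith
    · obtain ⟨i0, hi0, hAi⟩ := Finset.exists_mem_eq_sup' hI (fun i => x i - μ i)
      have h1 : x i0 - lvarY I J μ ν n i0
          ≤ Finset.univ.sup' Finset.univ_nonempty (fun k => x k - lvarY I J μ ν n k) :=
        Finset.le_sup' (fun k => x k - lvarY I J μ ν n k) (Finset.mem_univ i0)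
      have hval : lvarY I J μ ν n i0 = μ i0 - (n : ℝ) := by
        simp [lvarY, hi0]
      rw [hval] at h1
      rw [← hA] at hAi
      have : A = x i0 - μ i0 := hAi
      linarith
  · rw [← Finset.inf'_univ_eq_ciInf]
    apply le_antisymm
    · obtain ⟨j0, hj0, hBj⟩ := Finset.exists_mem_eq_inf' hJ (fun j => x j + ν j)
      have h1 : Finset.univ.inf' Finset.univ_nonempty (fun k => x k - lvarY I J μ ν n k)
          ≤ x j0 - lvarY I J μ ν n j0 :=
        Finset.inf'_le (fun k => x k - lvarY I J μ ν n k) (Finset.mem_univ j0)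
      have hj0I : j0 ∉ I := fun h => (Finset.disjoint_left.mp hdisj h) hj0
      have hval : lvarY I J μ ν n j0 = (n : ℝ) - ν j0 := by
        simp [lvarY, hj0, hj0I]
      rw [hval] at h1
      rw [← hB] at hBj
      have : B = x j0 + ν j0 := hBj
      linarith
    · apply Finset.le_inf'
      intro k _
      by_cases hkI : k ∈ I
      · simp only [lvarY, if_pos hkI]
        have h2 := hS k
        have h3 := neg_abs_le (x k)
        have h4 := le_abs_self B
        have h5 := le_abs_self (μ k)
        have h6 := abs_nonneg (ν k)
        have h7 := abs_nonneg A
        linarith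
      · by_cases hkJ : k ∈ J
        · have h1 : B ≤ x k + ν k := Finset.inf'_le (fun j => x j + ν j) hkJ
          simp only [lvarY, if_neg hkI, if_pos hkJ]
          linarith
        · simp only [lvarY, if_neg hkI, if_neg hkJ]
          have h2 := hS k
          have h3 := neg_abs_le (x k)
          have h4 := le_abs_self B
          have h5 := abs_nonneg (μ k)
          have h6 := abs_nonneg (ν k)
          have h7 := abs_nonneg A
          linarith

/-- every `x ↦ max_{i ∈ I} (x_i - μ_i) - min_{j ∈ J} (x_j + ν_j)`
(with the stated conditions) is a horofunction of `ℓ_var(𝒩, ℝ)`. -/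
theorem lvar_form_is_horofunction (N : ℕ) (hN : 2 ≤ N) (I J : Finset (Fin N))
    (hI : I.Nonempty) (hJ : J.Nonempty) (hdisj : Disjoint I J)
    (hIu : I ⊂ Finset.univ) (hJu : J ⊂ Finset.univ) (μ ν : Fin N → ℝ)
    (hμ : ∀ i ∈ I, 0 ≤ μ i) (hν : ∀ j ∈ J, 0 ≤ ν j)
    (hμ0 : I.inf' hI μ = 0) (hν0 : J.inf' hJ ν = 0) :
    (∃ y : ℕ → Fin N → ℝ,
      Tendsto (fun n => (⨆ i, y n i) - ⨅ i, y n i) atTop atTop ∧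
      ∀ x : Fin N → ℝ,
        Tendsto (fun n =>
            ((⨆ i, (x i - y n i)) - ⨅ i, (x i - y n i))
              - ((⨆ i, y n i) - ⨅ i, y n i)) atTop
          (𝓝 (I.sup' hI (fun i => x i - μ i) - J.inf' hJ (fun j => x j + ν j)))) ∧
    ¬∃ z : Fin N → ℝ, ∀ x : Fin N → ℝ,
      I.sup' hI (fun i => x i - μ i) - J.inf' hJ (fun j => x j + ν j)
        = ((⨆ i, (x i - z i)) - ⨅ i, (x i - z i)) - ((⨆ i, z i) - ⨅ i, z i) := by
  have hNpos : 0 < N := by omega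
  haveI : Nonempty (Fin N) := ⟨⟨0, hNpos⟩⟩
  constructor
  · -- the sequence y^n := lvarY I J μ ν n
    obtain ⟨M0, hM0⟩ := lvar_master hNpos J I hJ hI hdisj.symm ν μ (fun _ => 0)
    have hswap : ∀ (n : ℕ) (i : Fin N),
        (0 : ℝ) - lvarY J I ν μ n i = lvarY I J μ ν n i := by
      intro n i
      have hIJ := Finset.disjoint_left.mp hdisj
      simp only [lvarY]
      by_cases hiI : i ∈ I
      · rw [if_neg (fun h => hIJ hiI h), if_pos hiI, if_pos hiI]; ring
      · by_cases hiJ : i ∈ J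
        · rw [if_pos hiJ, if_neg hiI, if_pos hiJ]; ring
        · rw [if_neg hiJ, if_neg hiI, if_neg hiI, if_neg hiJ]; ring
    have hc1 : J.sup' hJ (fun j => (0 : ℝ) - ν j) = 0 := by
      apply le_antisymm
      · apply Finset.sup'_le
        intro j hj
        have := hν j hj
        linarith
      · obtain ⟨j0, hj0, h0⟩ := Finset.exists_mem_eq_inf' hJ ν
        have hνj0 : ν j0 = 0 := by rw [← h0, hν0]
        calc (0 : ℝ) = 0 - ν j0 := by rw [hνj0]; ring
        _ ≤ _ := Finset.le_sup' (fun j => (0 : ℝ) - ν j) hj0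
    have hc2 : I.inf' hI (fun i => (0 : ℝ) + μ i) = 0 := by
      simp only [zero_add]; exact hμ0
    have hnorm : ∀ n : ℕ, M0 ≤ (n : ℝ) →
        ((⨆ i, lvarY I J μ ν n i) - ⨅ i, lvarY I J μ ν n i) = 2 * (n : ℝ) := by
      intro n hn
      have h := hM0 n hn
      simp only [hswap n] at h
      rw [h.1, h.2, hc1, hc2]
      ring
    have hevM0 : ∀ᶠ n : ℕ in atTop, M0 ≤ (n : ℝ) :=
      tendsto_natCast_atTop_atTop.eventually_ge_atTop M0
    refine ⟨lvarY I J μ ν, ?_, ?_⟩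
    · have h2n : Tendsto (fun n : ℕ => 2 * (n : ℝ)) atTop atTop :=
        Tendsto.const_mul_atTop two_pos tendsto_natCast_atTop_atTop
      apply Tendsto.congr' _ h2n
      filter_upwards [hevM0] with n hn
      exact (hnorm n hn).symm
    · intro x
      obtain ⟨M, hM⟩ := lvar_master hNpos I J hI hJ hdisj μ ν x
      have hevM : ∀ᶠ n : ℕ in atTop, M ≤ (n : ℝ) :=
        tendsto_natCast_atTop_atTop.eventually_ge_atTop M
      apply Tendsto.congr' _ tendsto_const_nhds
      filter_upwards [hevM, hevM0] with n hn hn0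
      rw [(hM n hn).1, (hM n hn).2, hnorm n hn0]
      ring
  · -- no internal point realizes this functional
    rintro ⟨z, hz⟩
    set i₀ : Fin N := ⟨0, hNpos⟩ with hi₀
    set t : ℝ := ((⨆ i, z i) - ⨅ i, z i) / 2 + 1 with ht
    set x : Fin N → ℝ := fun i => if i ∈ I then -t else t with hx
    have hzvar : (0 : ℝ) ≤ (⨆ i, z i) - ⨅ i, z i := by
      have h1 : z i₀ ≤ ⨆ i, z i :=
        le_ciSup (Set.Finite.bddAbove (Set.finite_range z)) i₀
      have h2 : ⨅ i, z i ≤ z i₀ :=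
        ciInf_le (Set.Finite.bddBelow (Set.finite_range z)) i₀
      linarith
    have hA : I.sup' hI (fun i => x i - μ i) = -t := by
      apply le_antisymm
      · apply Finset.sup'_le
        intro i hi
        have := hμ i hi
        simp only [hx, if_pos hi]
        linarith
      · obtain ⟨i0, hi0, h0⟩ := Finset.exists_mem_eq_inf' hI μ
        have hμi0 : μ i0 = 0 := by rw [← h0, hμ0]
        calc -t = x i0 - μ i0 := by simp only [hx, if_pos hi0, hμi0]; ring
        _ ≤ _ := Finset.le_sup' (fun i => x i - μ i) hi0
    have hB : J.inf' hJ (fun j => x j + ν j) = t := by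
      have hJI : ∀ j ∈ J, j ∉ I := fun j hj h => (Finset.disjoint_left.mp hdisj h) hj
      apply le_antisymm
      · obtain ⟨j0, hj0, h0⟩ := Finset.exists_mem_eq_inf' hJ ν
        have hνj0 : ν j0 = 0 := by rw [← h0, hν0]
        calc J.inf' hJ (fun j => x j + ν j) ≤ x j0 + ν j0 :=
              Finset.inf'_le (fun j => x j + ν j) hj0
        _ = t := by simp only [hx, if_neg (hJI j0 hj0), hνj0]; ring
      · apply Finset.le_inf'
        intro j hj
        have := hν j hj
        simp only [hx, if_neg (hJI j hj)]
        linarith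
    have h := hz x
    rw [hA, hB] at h
    have hxz : (0 : ℝ) ≤ (⨆ i, (x i - z i)) - ⨅ i, (x i - z i) := by
      have h1 : x i₀ - z i₀ ≤ ⨆ i, (x i - z i) :=
        le_ciSup (Set.Finite.bddAbove (Set.finite_range (fun i => x i - z i))) i₀
      have h2 : ⨅ i, (x i - z i) ≤ x i₀ - z i₀ :=
        ciInf_le (Set.Finite.bddBelow (Set.finite_range (fun i => x i - z i))) i₀
      linarith
    rw [ht] at h
    linarith
end

section
/- Let N ≥ 2, 𝒩 = {1,...,N}, and suppose h is the pointwise limit, on the strictly positive vectors of ℝ^𝒩, of the functions x ↦ d_H(x, y^n) − d_H(𝟙, y^n) for some sequence (y^n) of strictly positive vectors with d_H(𝟙, y^n) → ∞, where 𝟙 = (1,...,1). Then there exist u, v ∈ ℝ^𝒩 with nonnegative entries, max_{i∈𝒩} u_i = 1, max_{i∈𝒩} v_i = 1, and u_i v_i = 0 for all i ∈ 𝒩, such that h(x) = log( max_{i∈𝒩} u_i x_i ) + log( max_{i∈𝒩} v_i / x_i ) for all strictly positive x ∈ ℝ^𝒩. Conversely, every function of this form arises as such a limit and is not of the form x ↦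 d_H(x, z) − d_H(𝟙, z) for any strictly positive z. -/
/-!
Write `m = min_i y_i` and `M = max_i y_i`. Then
`d_H(x, y) - d_H(𝟙, y) = log (max_i (m / y_i) x_i) + log (max_i (y_i / M) / x_i)`,
where the profiles `m / y` and `y / M` lie in `[0, 1]^N`, have maximum `1`, and the product of
their `i`-th entries is `m / M = exp (-d_H(𝟙, y))`. By compactness the profiles of `yⁿ` converge
along a subsequence; if `d_H(𝟙, yⁿ) → ∞` the limits `u, v` satisfy `u_i v_i = 0`, and the formula
passes to the limit. Conversely, the profiles of `y_i = (v_i + ε) / (u_i + ε)` are within `ε` of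
`u` and `v`. Such a limit is not of the form `x ↦ d_H(x, z) - d_H(𝟙, z)`, since these functions
are bounded below by `-d_H(𝟙, z)`, whereas the limit takes the value `log t` for every `t > 0`.
-/

open Filter Topology

/-- Hilbert's projective metric on the strictly positive vectors of `ℝ^𝒩`. -/
noncomputable def hilbertDist {N : ℕ} (x y : Fin N → ℝ) : ℝ :=
  Real.log (⨆ i, x i / y i) - Real.log (⨅ i, x i / y i)

section FiniteSupremum

variable {ι : Type*} [Finite ι] [Nonempty ι]

lemma ciSup_eq_of_le_of_eq {f : ι → ℝ} {c : ℝ} (hle : ∀ i, f i ≤ c) {i₀ : ι} (h : f i₀ = c) :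
    ⨆ i, f i = c :=
  le_antisymm (ciSup_le hle) (h ▸ le_ciSup (Finite.bddAbove_range f) i₀)

lemma iInf_pos_of_pos {f : ι → ℝ} (hf : ∀ i, 0 < f i) : 0 < ⨅ i, f i := by
  obtain ⟨i, hi⟩ := exists_eq_ciInf_of_finite (f := f)
  exact hi ▸ hf i

lemma iSup_pos_of_pos {f : ι → ℝ} (hf : ∀ i, 0 < f i) : 0 < ⨆ i, f i :=
  (iInf_pos_of_pos hf).trans_le (ciInf_le_ciSup (Finite.bddBelow_range f) (Finite.bddAbove_range f))

lemma iSup_inv_of_pos {f : ι → ℝ} (hf : ∀ i, 0 < f i) : ⨆ i, (f i)⁻¹ = (⨅ i, f i)⁻¹ := by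
  obtain ⟨i₀, hi₀⟩ := exists_eq_ciInf_of_finite (f := f)
  refine ciSup_eq_of_le_of_eq (fun i => ?_) (congrArg Inv.inv hi₀)
  exact inv_anti₀ (iInf_pos_of_pos hf) (ciInf_le (Finite.bddBelow_range f) i)

lemma iInf_inv_of_pos {f : ι → ℝ} (hf : ∀ i, 0 < f i) : ⨅ i, (f i)⁻¹ = (⨆ i, f i)⁻¹ := by
  have h := iSup_inv_of_pos (fun i => inv_pos.mpr (hf i))
  simp only [inv_inv] at h
  rw [h, inv_inv]

lemma tendsto_ciSup_of_tendsto {α : Type*} {l : Filter α} {f : α → ι → ℝ} {g : ι → ℝ}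
    (h : ∀ i, Tendsto (fun a => f a i) l (𝓝 (g i))) :
    Tendsto (fun a => ⨆ i, f a i) l (𝓝 (⨆ i, g i)) := by
  have := Fintype.ofFinite ι
  simp only [← Finset.sup'_univ_eq_ciSup]
  exact Tendsto.finset_sup'_nhds_apply Finset.univ_nonempty fun i _ => h i

end FiniteSupremum

section HoroForm

variable {ι : Type*} [Finite ι] [Nonempty ι]

noncomputable def hilbertHoroForm (u v x : ι → ℝ) : ℝ :=
  Real.log (⨆ i, u i * x i) + Real.log (⨆ i, v i / x i)

lemma tendsto_hilbertHoroForm {α : Type*} {l : Filter α} {u' v' : α → ι → ℝ} {u v x : ι → ℝ}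
    (hu : ∀ i, Tendsto (fun a => u' a i) l (𝓝 (u i)))
    (hv : ∀ i, Tendsto (fun a => v' a i) l (𝓝 (v i)))
    (hu1 : ⨆ i, u i = 1) (hv1 : ⨆ i, v i = 1) (hx : ∀ i, 0 < x i) :
    Tendsto (fun a => hilbertHoroForm (u' a) (v' a) x) l (𝓝 (hilbertHoroForm u v x)) := by
  obtain ⟨i, hi⟩ := exists_eq_ciSup_of_finite (f := u)
  obtain ⟨j, hj⟩ := exists_eq_ciSup_of_finite (f := v)
  have hux : 0 < ⨆ i, u i * x i := by
    refine lt_of_lt_of_le ?_ (le_ciSup (Finite.bddAbove_range _) i)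
    simpa [hi.trans hu1] using hx i
  have hvx : 0 < ⨆ i, v i / x i := by
    refine lt_of_lt_of_le ?_ (le_ciSup (Finite.bddAbove_range _) j)
    simpa [hj.trans hv1] using hx j
  exact ((Real.continuousAt_log hux.ne').tendsto.comp
      (tendsto_ciSup_of_tendsto fun i => (hu i).mul_const (x i))).add
    ((Real.continuousAt_log hvx.ne').tendsto.comp
      (tendsto_ciSup_of_tendsto fun i => (hv i).div_const (x i)))

noncomputable def infDiv (y : ι → ℝ) (i : ι) : ℝ := (⨅ j, y j) / y i

noncomputable def divSup (y : ι → ℝ) (i : ι) : ℝ := y i / ⨆ j, y j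

variable {y : ι → ℝ}

lemma infDiv_mem_Icc (hy : ∀ i, 0 < y i) : infDiv y ∈ Set.Icc 0 1 :=
  ⟨fun i => div_nonneg (iInf_pos_of_pos hy).le (hy i).le,
    fun i => div_le_one_of_le₀ (ciInf_le (Finite.bddBelow_range y) i) (hy i).le⟩

lemma divSup_mem_Icc (hy : ∀ i, 0 < y i) : divSup y ∈ Set.Icc 0 1 :=
  ⟨fun i => div_nonneg (hy i).le (iSup_pos_of_pos hy).le,
    fun i => div_le_one_of_le₀ (le_ciSup (Finite.bddAbove_range y) i) (iSup_pos_of_pos hy).le⟩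

lemma iSup_infDiv (hy : ∀ i, 0 < y i) : ⨆ i, infDiv y i = 1 := by
  simp only [infDiv, div_eq_mul_inv]
  rw [← Real.mul_iSup_of_nonneg (iInf_pos_of_pos hy).le, iSup_inv_of_pos hy,
    mul_inv_cancel₀ (iInf_pos_of_pos hy).ne']

lemma iSup_divSup (hy : ∀ i, 0 < y i) : ⨆ i, divSup y i = 1 := by
  simp only [divSup, div_eq_mul_inv]
  rw [← Real.iSup_mul_of_nonneg (inv_nonneg.mpr (iSup_pos_of_pos hy).le),
    mul_inv_cancel₀ (iSup_pos_of_pos hy).ne']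

end HoroForm

section HilbertDist

variable {N : ℕ} [Nonempty (Fin N)] {x y : Fin N → ℝ}

lemma hilbertDist_one_left (hy : ∀ i, 0 < y i) :
    hilbertDist 1 y = Real.log (⨆ i, y i) - Real.log (⨅ i, y i) := by
  simp only [hilbertDist, Pi.one_apply, one_div, iSup_inv_of_pos hy, iInf_inv_of_pos hy,
    Real.log_inv]
  ring

lemma hilbertDist_nonneg (hx : ∀ i, 0 < x i) (hy : ∀ i, 0 < y i) : 0 ≤ hilbertDist x y := by
  have hxy : ∀ i, 0 < x i / y i := fun i => div_pos (hx i) (hy i)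
  exact sub_nonneg.mpr <| Real.log_le_log (iInf_pos_of_pos hxy)
    (ciInf_le_ciSup (Finite.bddBelow_range _) (Finite.bddAbove_range _))

lemma hilbertDist_sub_hilbertDist_one (hx : ∀ i, 0 < x i) (hy : ∀ i, 0 < y i) :
    hilbertDist x y - hilbertDist 1 y = hilbertHoroForm (infDiv y) (divSup y) x := by
  have hxy : ∀ i, 0 < x i / y i := fun i => div_pos (hx i) (hy i)
  have hm := iInf_pos_of_pos hy
  have hM := iSup_pos_of_pos hy
  have hlower : ⨆ i, infDiv y i * x i = (⨅ i, y i) * ⨆ i, x i / y i := by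
    rw [Real.mul_iSup_of_nonneg hm.le]
    congr 1 with i
    simp only [infDiv]
    ring
  have hupper : ⨆ i, divSup y i / x i = (⨆ i, y i)⁻¹ * (⨅ i, x i / y i)⁻¹ := by
    rw [← iSup_inv_of_pos hxy, Real.mul_iSup_of_nonneg (inv_nonneg.mpr hM.le)]
    congr 1 with i
    simp only [divSup]
    field_simp
  rw [hilbertDist_one_left hy, hilbertHoroForm, hlower, hupper,
    Real.log_mul hm.ne' (iSup_pos_of_pos hxy).ne',
    Real.log_mul (inv_ne_zero hM.ne') (inv_ne_zero (iInf_pos_of_pos hxy).ne'),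
    Real.log_inv, Real.log_inv, hilbertDist]
  ring

lemma infDiv_mul_divSup_eq_exp (hy : ∀ i, 0 < y i) (i : Fin N) :
    infDiv y i * divSup y i = Real.exp (-hilbertDist 1 y) := by
  rw [hilbertDist_one_left hy, neg_sub,
    ← Real.log_div (iInf_pos_of_pos hy).ne' (iSup_pos_of_pos hy).ne',
    Real.exp_log (div_pos (iInf_pos_of_pos hy) (iSup_pos_of_pos hy))]
  have := (hy i).ne'
  simp only [infDiv, divSup]
  field_simp

end HilbertDist

structure IsHoroPair {ι : Type*} (u v : ι → ℝ) : Prop where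
  nonneg_left : ∀ i, 0 ≤ u i
  nonneg_right : ∀ i, 0 ≤ v i
  iSup_left : ⨆ i, u i = 1
  iSup_right : ⨆ i, v i = 1
  mul_eq_zero : ∀ i, u i * v i = 0

section Forward

variable {N : ℕ} [Nonempty (Fin N)]

theorem exists_isHoroPair_of_tendsto {h : (Fin N → ℝ) → ℝ} {y : ℕ → Fin N → ℝ}
    (hy : ∀ n i, 0 < y n i) (hd : Tendsto (fun n => hilbertDist 1 (y n)) atTop atTop)
    (hlim : ∀ x : Fin N → ℝ, (∀ i, 0 < x i) →
      Tendsto (fun n => hilbertDist x (y n) - hilbertDist 1 (y n)) atTop (𝓝 (h x))) :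
    ∃ u v : Fin N → ℝ, IsHoroPair u v ∧
      ∀ x : Fin N → ℝ, (∀ i, 0 < x i) → h x = hilbertHoroForm u v x := by
  obtain ⟨⟨u, v⟩, ⟨hu, hv⟩, φ, hφ, hconv⟩ := (isCompact_Icc.prod isCompact_Icc).tendsto_subseq
    fun n => Set.mk_mem_prod (infDiv_mem_Icc (hy n)) (divSup_mem_Icc (hy n))
  have hui : ∀ i, Tendsto (fun k => infDiv (y (φ k)) i) atTop (𝓝 (u i)) := fun i =>
    ((continuous_apply i).comp continuous_fst).continuousAt.tendsto.comp hconv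
  have hvi : ∀ i, Tendsto (fun k => divSup (y (φ k)) i) atTop (𝓝 (v i)) := fun i =>
    ((continuous_apply i).comp continuous_snd).continuousAt.tendsto.comp hconv
  have hu1 : ⨆ i, u i = 1 := tendsto_nhds_unique (tendsto_ciSup_of_tendsto hui)
    (by simp only [iSup_infDiv (hy _)]; exact tendsto_const_nhds)
  have hv1 : ⨆ i, v i = 1 := tendsto_nhds_unique (tendsto_ciSup_of_tendsto hvi)
    (by simp only [iSup_divSup (hy _)]; exact tendsto_const_nhds)
  have hexp : Tendsto (fun k => Real.exp (-hilbertDist 1 (y (φ k)))) atTop (𝓝 0) :=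
    Real.tendsto_exp_atBot.comp (tendsto_neg_atTop_atBot.comp (hd.comp hφ.tendsto_atTop))
  refine ⟨u, v, ⟨hu.1, hv.1, hu1, hv1, fun i => ?_⟩, fun x hx => ?_⟩
  · refine tendsto_nhds_unique ((hui i).mul (hvi i)) ?_
    simpa only [infDiv_mul_divSup_eq_exp (hy _)] using hexp
  · refine tendsto_nhds_unique ((hlim x hx).comp hφ.tendsto_atTop) ?_
    simpa only [Function.comp_def, hilbertDist_sub_hilbertDist_one hx (hy _)] using
      tendsto_hilbertHoroForm hui hvi hu1 hv1 hx

end Forward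

namespace IsHoroPair

variable {ι : Type*} {u v : ι → ℝ}

lemma symm (huv : IsHoroPair u v) : IsHoroPair v u :=
  ⟨huv.nonneg_right, huv.nonneg_left, huv.iSup_right, huv.iSup_left,
    fun i => mul_comm (v i) (u i) ▸ huv.mul_eq_zero i⟩

lemma le_one_left [Finite ι] (huv : IsHoroPair u v) (i : ι) : u i ≤ 1 :=
  huv.iSup_left ▸ le_ciSup (Finite.bddAbove_range u) i

lemma exists_left_eq_one [Finite ι] [Nonempty ι] (huv : IsHoroPair u v) :
    ∃ i, u i = 1 ∧ v i = 0 := by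
  obtain ⟨i, hi⟩ := exists_eq_ciSup_of_finite (f := u)
  have h1 : u i = 1 := hi.trans huv.iSup_left
  exact ⟨i, h1, by simpa [h1] using huv.mul_eq_zero i⟩

lemma exists_hilbertHoroForm_eq_log [Finite ι] [Nonempty ι] (huv : IsHoroPair u v) {t : ℝ}
    (ht : 0 < t) :
    ∃ x : ι → ℝ, (∀ i, 0 < x i) ∧ hilbertHoroForm u v x = Real.log t := by
  set x : ι → ℝ := fun i => if v i = 0 then t else 1
  obtain ⟨i₀, hu₀, hv₀⟩ := huv.exists_left_eq_one
  obtain ⟨i₁, hv₁, -⟩ := huv.symm.exists_left_eq_one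
  have hux : ⨆ i, u i * x i = t := by
    refine ciSup_eq_of_le_of_eq (fun i => ?_) (i₀ := i₀) (by simp [x, hu₀, hv₀])
    by_cases hvi : v i = 0
    · simpa [x, hvi] using mul_le_of_le_one_left ht.le (huv.le_one_left i)
    · simp [x, hvi, (_root_.mul_eq_zero.mp (huv.mul_eq_zero i)).resolve_right hvi, ht.le]
  have hvx : ⨆ i, v i / x i = 1 := by
    refine ciSup_eq_of_le_of_eq (fun i => ?_) (i₀ := i₁) (by simp [x, hv₁])
    by_cases hvi : v i = 0
    · simp [x, hvi]
    · simpa [x, hvi] using huv.symm.le_one_left i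
  refine ⟨x, fun i => ?_, by rw [hilbertHoroForm, hux, hvx, Real.log_one, add_zero]⟩
  by_cases hvi : v i = 0 <;> simp [x, hvi, ht]

end IsHoroPair

section BoundaryApprox

variable {ι : Type*} {u v : ι → ℝ} {ε : ℝ}

noncomputable def boundaryApprox (u v : ι → ℝ) (ε : ℝ) (i : ι) : ℝ := (v i + ε) / (u i + ε)

lemma IsHoroPair.boundaryApprox_pos (huv : IsHoroPair u v) (hε : 0 < ε) (i : ι) :
    0 < boundaryApprox u v ε i := by
  have := huv.nonneg_left i
  have := huv.nonneg_right i
  unfold boundaryApprox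
  positivity

variable [Finite ι] [Nonempty ι]

lemma IsHoroPair.iInf_boundaryApprox (huv : IsHoroPair u v) (hε : 0 < ε) :
    ⨅ i, boundaryApprox u v ε i = ε / (1 + ε) := by
  obtain ⟨i₀, hu₀, hv₀⟩ := huv.exists_left_eq_one
  refine le_antisymm ((ciInf_le (Finite.bddBelow_range _) i₀).trans_eq
    (by simp [boundaryApprox, hu₀, hv₀, add_comm])) (le_ciInf fun i => ?_)
  have := huv.le_one_left i
  have := huv.nonneg_right i
  rw [boundaryApprox, div_le_div_iff₀ (by linarith) (by linarith [huv.nonneg_left i])]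
  nlinarith

lemma IsHoroPair.iSup_boundaryApprox (huv : IsHoroPair u v) (hε : 0 < ε) :
    ⨆ i, boundaryApprox u v ε i = (1 + ε) / ε := by
  have hinv : ∀ i, boundaryApprox u v ε i = (boundaryApprox v u ε i)⁻¹ := fun i =>
    (inv_div _ _).symm
  simp only [hinv, iSup_inv_of_pos (huv.symm.boundaryApprox_pos hε),
    huv.symm.iInf_boundaryApprox hε, inv_div]

lemma IsHoroPair.divSup_boundaryApprox (huv : IsHoroPair u v) (hε : 0 < ε) (i : ι) :
    divSup (boundaryApprox u v ε) i = infDiv (boundaryApprox v u ε) i := by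
  have := (huv.boundaryApprox_pos hε i).ne'
  have := (huv.symm.boundaryApprox_pos hε i).ne'
  rw [divSup, infDiv, huv.iSup_boundaryApprox hε, huv.symm.iInf_boundaryApprox hε]
  simp only [boundaryApprox] at *
  field_simp

lemma IsHoroPair.abs_infDiv_boundaryApprox_sub_le (huv : IsHoroPair u v) (hε : 0 < ε) (i : ι) :
    |infDiv (boundaryApprox u v ε) i - u i| ≤ ε := by
  have hu0 := huv.nonneg_left i
  have hu1 := huv.le_one_left i
  have hv0 := huv.nonneg_right i
  have hden : 0 < (v i + ε) * (1 + ε) := by positivity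
  have herr : infDiv (boundaryApprox u v ε) i - u i
      = ε ^ 2 * (1 - u i) / ((v i + ε) * (1 + ε)) := by
    rw [infDiv, huv.iInf_boundaryApprox hε, boundaryApprox]
    field_simp
    linear_combination (-1 - ε) * huv.mul_eq_zero i
  rw [herr, abs_of_nonneg (by have := sub_nonneg.mpr hu1; positivity), div_le_iff₀ hden]
  nlinarith [mul_nonneg hε.le hv0, mul_nonneg (mul_nonneg hε.le hε.le) hu0]

lemma IsHoroPair.tendsto_infDiv_boundaryApprox (huv : IsHoroPair u v) (i : ι) :
    Tendsto (fun ε => infDiv (boundaryApprox u v ε) i) (𝓝[>] 0) (𝓝 (u i)) := by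
  refine tendsto_sub_nhds_zero_iff.mp (squeeze_zero_norm' ?_ nhdsWithin_le_nhds)
  filter_upwards [self_mem_nhdsWithin] with ε hε
  exact huv.abs_infDiv_boundaryApprox_sub_le hε i

end BoundaryApprox

section Converse

variable {N : ℕ} [Nonempty (Fin N)] {u v : Fin N → ℝ}

lemma IsHoroPair.hilbertDist_one_boundaryApprox (huv : IsHoroPair u v) {ε : ℝ} (hε : 0 < ε) :
    hilbertDist 1 (boundaryApprox u v ε) = 2 * Real.log (ε⁻¹ + 1) := by
  rw [hilbertDist_one_left (huv.boundaryApprox_pos hε), huv.iSup_boundaryApprox hε,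
    huv.iInf_boundaryApprox hε, ← inv_div, Real.log_inv,
    show ε / (1 + ε) = (ε⁻¹ + 1)⁻¹ by field_simp, Real.log_inv]
  ring

theorem IsHoroPair.exists_seq_tendsto (huv : IsHoroPair u v) :
    ∃ y : ℕ → Fin N → ℝ, (∀ n i, 0 < y n i) ∧
      Tendsto (fun n => hilbertDist 1 (y n)) atTop atTop ∧
      ∀ x : Fin N → ℝ, (∀ i, 0 < x i) →
        Tendsto (fun n => hilbertDist x (y n) - hilbertDist 1 (y n)) atTop
          (𝓝 (hilbertHoroForm u v x)) := by
  have hpos : ∀ n : ℕ, 0 < 1 / ((n : ℝ) + 1) := fun n => by positivity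
  have hε : Tendsto (fun n : ℕ => 1 / ((n : ℝ) + 1)) atTop (𝓝[>] 0) :=
    tendsto_nhdsWithin_iff.mpr
      ⟨tendsto_one_div_add_atTop_nhds_zero_nat, Eventually.of_forall hpos⟩
  refine ⟨fun n => boundaryApprox u v (1 / ((n : ℝ) + 1)),
    fun n => huv.boundaryApprox_pos (hpos n), ?_, fun x hx => ?_⟩
  · simp only [huv.hilbertDist_one_boundaryApprox (hpos _)]
    exact (Real.tendsto_log_atTop.comp
      ((tendsto_inv_nhdsGT_zero.comp hε).atTop_add tendsto_const_nhds)).const_mul_atTop two_pos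
  · simp only [hilbertDist_sub_hilbertDist_one hx (huv.boundaryApprox_pos (hpos _))]
    refine tendsto_hilbertHoroForm (fun i => (huv.tendsto_infDiv_boundaryApprox i).comp hε)
      (fun i => ?_) huv.iSup_left huv.iSup_right hx
    exact ((huv.symm.tendsto_infDiv_boundaryApprox i).comp hε).congr fun n =>
      (huv.divSup_boundaryApprox (hpos n) i).symm

theorem IsHoroPair.not_exists_hilbertDist_sub (huv : IsHoroPair u v) :
    ¬∃ z : Fin N → ℝ, (∀ i, 0 < z i) ∧ ∀ x : Fin N → ℝ, (∀ i, 0 < x i) →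
      hilbertHoroForm u v x = hilbertDist x z - hilbertDist 1 z := by
  rintro ⟨z, hz, hform⟩
  obtain ⟨x, hx, hlog⟩ := huv.exists_hilbertHoroForm_eq_log (Real.exp_pos (-hilbertDist 1 z - 1))
  have := hform x hx
  rw [hlog, Real.log_exp] at this
  linarith [hilbertDist_nonneg hx hz]

end Converse

/-- the horofunctions of Hilbert's projective metric on the
interior of the standard cone are exactly the functions
`x ↦ log (max_i u_i x_i) + log (max_i v_i / x_i)` with `u, v ≥ 0`,
`max u = max v = 1` and `u ⊙ v = 0`. -/
theorem hilbert_horofunctions (N : ℕ) (hN : 2 ≤ N) :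
    (∀ h : (Fin N → ℝ) → ℝ,
      (∃ y : ℕ → Fin N → ℝ, (∀ n i, 0 < y n i) ∧
        Tendsto (fun n => hilbertDist (1 : Fin N → ℝ) (y n)) atTop atTop ∧
        ∀ x : Fin N → ℝ, (∀ i, 0 < x i) →
          Tendsto (fun n => hilbertDist x (y n) - hilbertDist (1 : Fin N → ℝ) (y n))
            atTop (𝓝 (h x))) →
      ∃ u v : Fin N → ℝ, (∀ i, 0 ≤ u i) ∧ (∀ i, 0 ≤ v i) ∧
        (⨆ i, u i) = 1 ∧ (⨆ i, v i) = 1 ∧ (∀ i, u i * v i = 0) ∧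
        ∀ x : Fin N → ℝ, (∀ i, 0 < x i) →
          h x = Real.log (⨆ i, u i * x i) + Real.log (⨆ i, v i / x i)) ∧
    (∀ u v : Fin N → ℝ, (∀ i, 0 ≤ u i) → (∀ i, 0 ≤ v i) →
      (⨆ i, u i) = 1 → (⨆ i, v i) = 1 → (∀ i, u i * v i = 0) →
      (∃ y : ℕ → Fin N → ℝ, (∀ n i, 0 < y n i) ∧
        Tendsto (fun n => hilbertDist (1 : Fin N → ℝ) (y n)) atTop atTop ∧
        ∀ x : Fin N → ℝ, (∀ i, 0 < x i) →
          Tendsto (fun n => hilbertDist x (y n) - hilbertDist (1 : Fin N → ℝ) (y n))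
            atTop (𝓝 (Real.log (⨆ i, u i * x i) + Real.log (⨆ i, v i / x i)))) ∧
      ¬∃ z : Fin N → ℝ, (∀ i, 0 < z i) ∧
        ∀ x : Fin N → ℝ, (∀ i, 0 < x i) →
          Real.log (⨆ i, u i * x i) + Real.log (⨆ i, v i / x i)
            = hilbertDist x z - hilbertDist (1 : Fin N → ℝ) z) := by
  have : Nonempty (Fin N) := ⟨⟨0, by omega⟩⟩
  refine ⟨fun h ⟨y, hy, hd, hlim⟩ => ?_, fun u v hu hv hu1 hv1 huv => ?_⟩
  · obtain ⟨u, v, ⟨hu, hv, hu1, hv1, huv⟩, hh⟩ := exists_isHoroPair_of_tendsto hy hd hlim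
    exact ⟨u, v, hu, hv, hu1, hv1, huv, hh⟩
  · have hpair : IsHoroPair u v := ⟨hu, hv, hu1, hv1, huv⟩
    exact ⟨hpair.exists_seq_tendsto, hpair.not_exists_hilbertDist_sub⟩
end

section
/- Let N ≥ 2, 𝒩 = {1,...,N}, let T be an N × N real matrix with T_{ij} > 0 for all i, j ∈ 𝒩, and let x be a strictly positive vector in ℝ^𝒩. Let u, v ∈ ℝ^𝒩 have nonnegative entries with max_{i∈𝒩} u_i = 1, max_{i∈𝒩} v_i = 1, and u_i v_i = 0 for all i. Then log( max_{i∈𝒩} u_i (Tx)_i ) + log( max_{j∈𝒩} v_j / (Tx)_j ) ≤ log( max_{i,j∈𝒩} u_i v_j (max_{k∈𝒩} T_{ik}) / (min_{k∈𝒩} T_{jk}) ). -/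
open Filter Topology

/-!
Write `w = T x` and `ρ i j = (max_k T_{ik}) / (min_k T_{jk})`. Bounding every entry of `x` by
the row extrema of `T` gives `w_i / w_j ≤ ρ i j`, because the factor `∑_k x_k` cancels. Both
suprema on the left are over nonnegative families, so their product is the double supremum of
`u_i w_i · v_j / w_j = u_i v_j · w_i / w_j ≤ u_i v_j ρ i j`. Positivity of both factors, needed
to combine the logarithms, comes from `max u = max v = 1`.
-/

theorem Real.exists_pos_of_iSup_pos {ι : Sort*} {f : ι → ℝ} (h : 0 < ⨆ i, f i) :
    ∃ i, 0 < f i := by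
  by_contra! hf
  exact (Real.iSup_nonpos hf).not_gt h

theorem Real.iSup_mul_iSup_of_nonneg {ι κ : Sort*} {f : ι → ℝ} {g : κ → ℝ}
    (hf : ∀ i, 0 ≤ f i) (hg : ∀ j, 0 ≤ g j) :
    (⨆ i, f i) * (⨆ j, g j) = ⨆ i, ⨆ j, f i * g j := by
  rw [Real.iSup_mul_of_nonneg (Real.iSup_nonneg hg)]
  simp only [Real.mul_iSup_of_nonneg (hf _)]

namespace Matrix

variable {m n : Type*} [Fintype n] (T : Matrix m n ℝ) {x : n → ℝ}

theorem mulVec_le_iSup_mul_sum (hx : ∀ k, 0 ≤ x k) (i : m) :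
    T.mulVec x i ≤ (⨆ k, T i k) * ∑ k, x k := by
  rw [Finset.mul_sum]
  exact Finset.sum_le_sum fun k _ =>
    mul_le_mul_of_nonneg_right (le_ciSup (Set.finite_range _).bddAbove k) (hx k)

theorem iInf_mul_sum_le_mulVec (hx : ∀ k, 0 ≤ x k) (i : m) :
    (⨅ k, T i k) * ∑ k, x k ≤ T.mulVec x i := by
  rw [Finset.mul_sum]
  exact Finset.sum_le_sum fun k _ =>
    mul_le_mul_of_nonneg_right (ciInf_le (Set.finite_range _).bddBelow k) (hx k)

variable [Nonempty n] {T}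

theorem iInf_pos_of_pos (hT : ∀ i k, 0 < T i k) (i : m) : 0 < ⨅ k, T i k := by
  obtain ⟨k, hk⟩ := exists_eq_ciInf_of_finite (f := T i)
  exact hk ▸ hT i k

theorem mulVec_pos (hT : ∀ i k, 0 < T i k) (hx : ∀ k, 0 < x k) (i : m) :
    0 < T.mulVec x i :=
  Finset.sum_pos (fun k _ => mul_pos (hT i k) (hx k)) Finset.univ_nonempty

theorem mulVec_div_mulVec_le (hT : ∀ i k, 0 < T i k) (hx : ∀ k, 0 < x k) (i j : m) :
    T.mulVec x i / T.mulVec x j ≤ (⨆ k, T i k) / ⨅ k, T j k := by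
  have hsum : 0 < ∑ k, x k := Finset.sum_pos (fun k _ => hx k) Finset.univ_nonempty
  have hx' : ∀ k, 0 ≤ x k := fun k => (hx k).le
  calc T.mulVec x i / T.mulVec x j
      ≤ ((⨆ k, T i k) * ∑ k, x k) / ((⨅ k, T j k) * ∑ k, x k) :=
        div_le_div₀ ((T.mulVec_pos hT hx i).le.trans (T.mulVec_le_iSup_mul_sum hx' i))
          (T.mulVec_le_iSup_mul_sum hx' i) (mul_pos (iInf_pos_of_pos hT j) hsum)
          (T.iInf_mul_sum_le_mulVec hx' j)
    _ = (⨆ k, T i k) / ⨅ k, T j k := mul_div_mul_right _ _ hsum.ne'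

end Matrix

theorem horofunction_bound_positive_matrix_general (N : ℕ)
    (T : Matrix (Fin N) (Fin N) ℝ) (hT : ∀ i j, 0 < T i j)
    (x : Fin N → ℝ) (hx : ∀ i, 0 < x i)
    (u v : Fin N → ℝ) (hu : ∀ i, 0 ≤ u i) (hv : ∀ i, 0 ≤ v i)
    (hu1 : (⨆ i, u i) = 1) (hv1 : (⨆ i, v i) = 1) :
    Real.log (⨆ i, u i * T.mulVec x i) + Real.log (⨆ j, v j / T.mulVec x j)
      ≤ Real.log (⨆ i, ⨆ j, u i * v j * ((⨆ k, T i k) / ⨅ k, T j k)) := by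
  obtain ⟨i₀, hui₀⟩ := Real.exists_pos_of_iSup_pos (hu1 ▸ one_pos)
  obtain ⟨j₀, hvj₀⟩ := Real.exists_pos_of_iSup_pos (hv1 ▸ one_pos)
  have : Nonempty (Fin N) := ⟨i₀⟩
  have hw := Matrix.mulVec_pos hT hx
  have hbdd (f : Fin N → ℝ) : BddAbove (Set.range f) := (Set.finite_range f).bddAbove
  have hA : 0 < ⨆ i, u i * T.mulVec x i :=
    (mul_pos hui₀ (hw i₀)).trans_le (le_ciSup (hbdd fun i => u i * T.mulVec x i) i₀)
  have hB : 0 < ⨆ j, v j / T.mulVec x j :=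
    (div_pos hvj₀ (hw j₀)).trans_le (le_ciSup (hbdd fun j => v j / T.mulVec x j) j₀)
  have hAB : (⨆ i, u i * T.mulVec x i) * (⨆ j, v j / T.mulVec x j)
      ≤ ⨆ i, ⨆ j, u i * v j * ((⨆ k, T i k) / ⨅ k, T j k) := by
    rw [Real.iSup_mul_iSup_of_nonneg (fun i => mul_nonneg (hu i) (hw i).le)
      (fun j => div_nonneg (hv j) (hw j).le)]
    refine ciSup_mono (hbdd _) fun i => ciSup_mono (hbdd _) fun j => ?_
    calc u i * T.mulVec x i * (v j / T.mulVec x j)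
        = u i * v j * (T.mulVec x i / T.mulVec x j) := by field_simp
      _ ≤ u i * v j * ((⨆ k, T i k) / ⨅ k, T j k) :=
        mul_le_mul_of_nonneg_left (Matrix.mulVec_div_mulVec_le hT hx i j)
          (mul_nonneg (hu i) (hv j))
  rw [← Real.log_mul hA.ne' hB.ne']
  exact Real.log_le_log (mul_pos hA hB) hAB

/-- the horofunction bound (5.1) of the paper for a positive
matrix acting on a strictly positive vector. -/
theorem horofunction_bound_positive_matrix (N : ℕ) (hN : 2 ≤ N)
    (T : Matrix (Fin N) (Fin N) ℝ) (hT : ∀ i j, 0 < T i j)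
    (x : Fin N → ℝ) (hx : ∀ i, 0 < x i)
    (u v : Fin N → ℝ) (hu : ∀ i, 0 ≤ u i) (hv : ∀ i, 0 ≤ v i)
    (hu1 : (⨆ i, u i) = 1) (hv1 : (⨆ i, v i) = 1)
    (huv : ∀ i, u i * v i = 0) :
    Real.log (⨆ i, u i * T.mulVec x i) + Real.log (⨆ j, v j / T.mulVec x j)
      ≤ Real.log (⨆ i, ⨆ j, u i * v j * ((⨆ k, T i k) / ⨅ k, T j k)) :=
  horofunction_bound_positive_matrix_general N T hT x hx u v hu hv hu1 hv1
end

section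
/- Let N ≥ 2, 𝒩 = {1,...,N}, and let T be an N × N real matrix with T_{ij} > 0 for all i, j ∈ 𝒩. Define C to be the set of strictly positive vectors x ∈ ℝ^𝒩 such that for all u, v ∈ ℝ^𝒩 with nonnegative entries, max_{i∈𝒩} u_i = 1, max_{i∈𝒩} v_i = 1, and u_i v_i = 0 for all i, one has log( max_{i∈𝒩} u_i x_i ) + log( max_{j∈𝒩} v_j / x_j ) ≤ log( max_{i,j∈𝒩} u_i v_j (max_{k∈𝒩} T_{ik}) / (min_{k∈𝒩} T_{jk}) ). Then C is nonempty, convex, and invariant under T, i.e., Tx ∈ C whenever x ∈ C. -/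
open Filter Topology

/-- The intersection of the horoballs `𝓗(h_{u,v}, r_{u,v})` inside the interior
of the standard cone, for a positive matrix `T`. -/
def horoballCore (N : ℕ) (T : Matrix (Fin N) (Fin N) ℝ) : Set (Fin N → ℝ) :=
  {x | (∀ i, 0 < x i) ∧
    ∀ u v : Fin N → ℝ, (∀ i, 0 ≤ u i) → (∀ i, 0 ≤ v i) →
      (⨆ i, u i) = 1 → (⨆ i, v i) = 1 → (∀ i, u i * v i = 0) →
      Real.log (⨆ i, u i * x i) + Real.log (⨆ j, v j / x j)
        ≤ Real.log (⨆ i, ⨆ j, u i * v j * ((⨆ k, T i k) / ⨅ k, T j k))}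

private lemma fin_sup_attained {N : ℕ} [Nonempty (Fin N)] (f : Fin N → ℝ) :
    ∃ i, (⨆ j, f j) = f i := by
  obtain ⟨i, hi⟩ := Finite.exists_max f
  exact ⟨i, le_antisymm (ciSup_le hi) (le_ciSup (Set.finite_range f).bddAbove i)⟩

private lemma fin_inf_attained {N : ℕ} [Nonempty (Fin N)] (f : Fin N → ℝ) :
    ∃ i, (⨅ j, f j) = f i := by
  obtain ⟨i, hi⟩ := Finite.exists_min f
  exact ⟨i, le_antisymm (ciInf_le (Set.finite_range f).bddBelow i) (le_ciInf hi)⟩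

private lemma fin_le_sup {N : ℕ} [Nonempty (Fin N)] (f : Fin N → ℝ) (i : Fin N) :
    f i ≤ ⨆ j, f j :=
  le_ciSup (Set.finite_range f).bddAbove i

private lemma fin_inf_le {N : ℕ} [Nonempty (Fin N)] (f : Fin N → ℝ) (i : Fin N) :
    (⨅ j, f j) ≤ f i :=
  ciInf_le (Set.finite_range f).bddBelow i

section

variable {N : ℕ} (T : Matrix (Fin N) (Fin N) ℝ)

private lemma sup_pos [Nonempty (Fin N)] (hT : ∀ i j, 0 < T i j) (i : Fin N) :
    0 < ⨆ k, T i k := by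
  obtain ⟨k, hk⟩ := fin_sup_attained (fun k => T i k)
  rw [hk]; exact hT i k

private lemma inf_pos [Nonempty (Fin N)] (hT : ∀ i j, 0 < T i j) (j : Fin N) :
    0 < ⨅ k, T j k := by
  obtain ⟨k, hk⟩ := fin_inf_attained (fun k => T j k)
  rw [hk]; exact hT j k

private lemma R_term_le [Nonempty (Fin N)] (u v : Fin N → ℝ) (i j : Fin N) :
    u i * v j * ((⨆ k, T i k) / ⨅ k, T j k)
      ≤ ⨆ i, ⨆ j, u i * v j * ((⨆ k, T i k) / ⨅ k, T j k) := by
  refine le_trans (fin_le_sup (fun j => u i * v j * ((⨆ k, T i k) / ⨅ k, T j k)) j) ?_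
  exact fin_le_sup (fun i => ⨆ j, u i * v j * ((⨆ k, T i k) / ⨅ k, T j k)) i

private lemma R_pos [Nonempty (Fin N)] (hT : ∀ i j, 0 < T i j) (u v : Fin N → ℝ)
    (hu1 : (⨆ i, u i) = 1) (hv1 : (⨆ i, v i) = 1) :
    0 < ⨆ i, ⨆ j, u i * v j * ((⨆ k, T i k) / ⨅ k, T j k) := by
  obtain ⟨i0, hi0⟩ := fin_sup_attained u
  obtain ⟨j0, hj0⟩ := fin_sup_attained v
  rw [hu1] at hi0; rw [hv1] at hj0
  refine lt_of_lt_of_le ?_ (R_term_le T u v i0 j0)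
  rw [← hi0, ← hj0]
  simpa using div_pos (sup_pos T hT i0) (inf_pos T hT j0)

/-- The log-form inequality is equivalent to a family of linear inequalities in `x`. -/
private lemma log_ineq_iff [Nonempty (Fin N)] (hT : ∀ i j, 0 < T i j)
    (x : Fin N → ℝ) (hx : ∀ i, 0 < x i)
    (u v : Fin N → ℝ) (hu : ∀ i, 0 ≤ u i) (hv : ∀ i, 0 ≤ v i)
    (hu1 : (⨆ i, u i) = 1) (hv1 : (⨆ i, v i) = 1) :
    (Real.log (⨆ i, u i * x i) + Real.log (⨆ j, v j / x j)
        ≤ Real.log (⨆ i, ⨆ j, u i * v j * ((⨆ k, T i k) / ⨅ k, T j k)))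
    ↔ ∀ i j, u i * v j * x i
        ≤ (⨆ i, ⨆ j, u i * v j * ((⨆ k, T i k) / ⨅ k, T j k)) * x j := by
  set R := ⨆ i, ⨆ j, u i * v j * ((⨆ k, T i k) / ⨅ k, T j k) with hR
  have hR0 : 0 < R := R_pos T hT u v hu1 hv1
  obtain ⟨i0, hi0⟩ := fin_sup_attained u
  obtain ⟨j0, hj0⟩ := fin_sup_attained v
  rw [hu1] at hi0; rw [hv1] at hj0
  have hA : 0 < ⨆ i, u i * x i := by
    refine lt_of_lt_of_le ?_ (fin_le_sup (fun i => u i * x i) i0)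
    rw [← hi0]; simpa using hx i0
  have hB : 0 < ⨆ j, v j / x j := by
    refine lt_of_lt_of_le ?_ (fin_le_sup (fun j => v j / x j) j0)
    exact div_pos (by rw [← hj0]; norm_num) (hx j0)
  rw [← Real.log_mul hA.ne' hB.ne',
    Real.log_le_log_iff (mul_pos hA hB) hR0]
  constructor
  · intro h i j
    have h1 : u i * x i ≤ ⨆ i, u i * x i := fin_le_sup (fun i => u i * x i) i
    have h2 : v j / x j ≤ ⨆ j, v j / x j := fin_le_sup (fun j => v j / x j) j
    have h3 : (u i * x i) * (v j / x j) ≤ (⨆ i, u i * x i) * (⨆ j, v j / x j) :=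
      mul_le_mul h1 h2 (div_nonneg (hv j) (hx j).le) hA.le
    have h4 : u i * v j * x i / x j ≤ R := by
      calc u i * v j * x i / x j = (u i * x i) * (v j / x j) := by
            field_simp
        _ ≤ _ := le_trans h3 h
    exact (div_le_iff₀ (hx j)).mp h4
  · intro h
    obtain ⟨iA, hiA⟩ := fin_sup_attained (fun i => u i * x i)
    obtain ⟨jB, hjB⟩ := fin_sup_attained (fun j => v j / x j)
    rw [hiA, hjB]
    have h4 : u iA * v jB * x iA / x jB ≤ R := (div_le_iff₀ (hx jB)).mpr (h iA jB)
    calc (u iA * x iA) * (v jB / x jB) = u iA * v jB * x iA / x jB := by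
          field_simp
      _ ≤ R := h4

/-- Membership in the horoball core, characterized by linear inequalities. -/
private lemma mem_horoballCore_iff [Nonempty (Fin N)] (hT : ∀ i j, 0 < T i j)
    (x : Fin N → ℝ) :
    x ∈ horoballCore N T ↔ (∀ i, 0 < x i) ∧
      ∀ u v : Fin N → ℝ, (∀ i, 0 ≤ u i) → (∀ i, 0 ≤ v i) →
        (⨆ i, u i) = 1 → (⨆ i, v i) = 1 → (∀ i, u i * v i = 0) →
        ∀ i j, u i * v j * x i
          ≤ (⨆ i, ⨆ j, u i * v j * ((⨆ k, T i k) / ⨅ k, T j k)) * x j := by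
  constructor
  · rintro ⟨hx, h⟩
    exact ⟨hx, fun u v hu hv hu1 hv1 huv =>
      (log_ineq_iff T hT x hx u v hu hv hu1 hv1).mp (h u v hu hv hu1 hv1 huv)⟩
  · rintro ⟨hx, h⟩
    exact ⟨hx, fun u v hu hv hu1 hv1 huv =>
      (log_ineq_iff T hT x hx u v hu hv hu1 hv1).mpr (h u v hu hv hu1 hv1 huv)⟩

private lemma mulVec_mem [Nonempty (Fin N)] (hT : ∀ i j, 0 < T i j)
    (y : Fin N → ℝ) (hy : ∀ i, 0 < y i) :
    T.mulVec y ∈ horoballCore N T := by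
  have hSy : 0 < ∑ k, y k :=
    Finset.sum_pos (fun k _ => hy k) Finset.univ_nonempty
  have hTy : ∀ i, 0 < T.mulVec y i := by
    intro i
    exact Finset.sum_pos (fun k _ => mul_pos (hT i k) (hy k)) Finset.univ_nonempty
  rw [mem_horoballCore_iff T hT]
  refine ⟨hTy, fun u v hu hv hu1 hv1 huv i j => ?_⟩
  set R := ⨆ i, ⨆ j, u i * v j * ((⨆ k, T i k) / ⨅ k, T j k) with hRdef
  have hmj : 0 < ⨅ k, T j k := inf_pos T hT j
  have key : T.mulVec y i ≤ ((⨆ k, T i k) / ⨅ k, T j k) * T.mulVec y j := by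
    rw [div_mul_eq_mul_div, le_div_iff₀ hmj]
    have h1 : T.mulVec y i ≤ (⨆ k, T i k) * ∑ k, y k := by
      rw [Matrix.mulVec, Finset.mul_sum]
      refine Finset.sum_le_sum fun k _ => ?_
      exact mul_le_mul_of_nonneg_right (fin_le_sup (fun k => T i k) k) (hy k).le
    have h2 : (⨅ k, T j k) * ∑ k, y k ≤ T.mulVec y j := by
      rw [Matrix.mulVec, Finset.mul_sum]
      refine Finset.sum_le_sum fun k _ => ?_
      exact mul_le_mul_of_nonneg_right (fin_inf_le (fun k => T j k) k) (hy k).le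
    calc T.mulVec y i * (⨅ k, T j k) ≤ ((⨆ k, T i k) * ∑ k, y k) * (⨅ k, T j k) :=
          mul_le_mul_of_nonneg_right h1 hmj.le
      _ = (⨆ k, T i k) * ((⨅ k, T j k) * ∑ k, y k) := by ring
      _ ≤ (⨆ k, T i k) * T.mulVec y j :=
          mul_le_mul_of_nonneg_left h2 (sup_pos T hT i).le
  calc u i * v j * T.mulVec y i
      ≤ u i * v j * (((⨆ k, T i k) / ⨅ k, T j k) * T.mulVec y j) :=
        mul_le_mul_of_nonneg_left key (mul_nonneg (hu i) (hv j))
    _ = (u i * v j * ((⨆ k, T i k) / ⨅ k, T j k)) * T.mulVec y j := by ring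
    _ ≤ R * T.mulVec y j :=
        mul_le_mul_of_nonneg_right (R_term_le T u v i j) (hTy j).le

end

/-- the set `C` is nonempty, convex and invariant under `T`. -/
theorem horoballCore_nonempty_convex_invariant (N : ℕ) (hN : 2 ≤ N)
    (T : Matrix (Fin N) (Fin N) ℝ) (hT : ∀ i j, 0 < T i j) :
    (horoballCore N T).Nonempty ∧ Convex ℝ (horoballCore N T) ∧
      ∀ x ∈ horoballCore N T, T.mulVec x ∈ horoballCore N T := by
  haveI : Nonempty (Fin N) := Fin.pos_iff_nonempty.mp (by omega)
  refine ⟨⟨T.mulVec (fun _ => 1), mulVec_mem T hT _ (fun _ => one_pos)⟩, ?_, ?_⟩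
  · intro x hx y hy a b ha hb hab
    rw [mem_horoballCore_iff T hT] at hx hy ⊢
    obtain ⟨hx0, hxlin⟩ := hx
    obtain ⟨hy0, hylin⟩ := hy
    constructor
    · intro i
      simp only [Pi.add_apply, Pi.smul_apply, smul_eq_mul]
      rcases ha.lt_or_eq with ha' | ha'
      · nlinarith [mul_pos ha' (hx0 i), mul_nonneg hb (hy0 i).le]
      · have hb1 : b = 1 := by linarith
        rw [← ha', hb1]; simpa using hy0 i
    · intro u v hu hv hu1 hv1 huv i j
      have h1 := hxlin u v hu hv hu1 hv1 huv i j
      have h2 := hylin u v hu hv hu1 hv1 huv i j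
      simp only [Pi.add_apply, Pi.smul_apply, smul_eq_mul]
      nlinarith [mul_le_mul_of_nonneg_left h1 ha, mul_le_mul_of_nonneg_left h2 hb]
  · intro x hx
    exact mulVec_mem T hT x hx.1
end

section
/- Let N ≥ 2, 𝒩 = {1,...,N}, let T be an N × N real matrix with T_{ij} > 0 for all i, j ∈ 𝒩, and let x, y be strictly positive vectors in ℝ^𝒩 such that x is not a positive scalar multiple of y. Then d_H(Tx, Ty) < d_H(x, y). -/
open Filter Topology

/-- a positive matrix strictly contracts Hilbert's projective
metric on pairs of strictly positive vectors that are not proportional. -/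
theorem positive_matrix_strict_contraction (N : ℕ) (hN : 2 ≤ N)
    (T : Matrix (Fin N) (Fin N) ℝ) (hT : ∀ i j, 0 < T i j)
    (x y : Fin N → ℝ) (hx : ∀ i, 0 < x i) (hy : ∀ i, 0 < y i)
    (hxy : ¬∃ c : ℝ, 0 < c ∧ x = c • y) :
    hilbertDist (T.mulVec x) (T.mulVec y) < hilbertDist x y := by
  have hNe : Nonempty (Fin N) := ⟨⟨0, by omega⟩⟩
  set r : Fin N → ℝ := fun k => x k / y k with hr
  have hrpos : ∀ k, 0 < r k := fun k => div_pos (hx k) (hy k)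
  obtain ⟨kM, hkM⟩ := Finite.exists_max r
  obtain ⟨km, hkm⟩ := Finite.exists_min r
  have hM : (⨆ i, r i) = r kM :=
    le_antisymm (ciSup_le hkM) (le_ciSup (Set.finite_range r).bddAbove kM)
  have hm : (⨅ i, r i) = r km :=
    le_antisymm (ciInf_le (Set.finite_range r).bddBelow km) (le_ciInf hkm)
  have hx_eq : ∀ k, x k = r k * y k := fun k =>
    (div_mul_cancel₀ (x k) (hy k).ne').symm
  have hlt : r km < r kM := by
    rcases lt_or_eq_of_le (hkm kM) with h | h
    · exact h
    · exfalso
      apply hxy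
      refine ⟨r kM, hrpos kM, funext fun k => ?_⟩
      have h1 : r k = r kM := le_antisymm (hkM k) (h ▸ hkm k)
      simpa [h1] using hx_eq k
  have hTy : ∀ i, 0 < T.mulVec y i := fun i => by
    apply Finset.sum_pos (fun k _ => mul_pos (hT i k) (hy k)) ⟨km, Finset.mem_univ km⟩
  have upper : ∀ i, T.mulVec x i < r kM * T.mulVec y i := fun i => by
    have h1 : T.mulVec x i = ∑ k, T i k * (r k * y k) := by
      simp only [Matrix.mulVec, dotProduct]
      exact Finset.sum_congr rfl fun k _ => by rw [← hx_eq k]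
    have h2 : r kM * T.mulVec y i = ∑ k, T i k * (r kM * y k) := by
      simp only [Matrix.mulVec, dotProduct, Finset.mul_sum]
      exact Finset.sum_congr rfl fun k _ => by ring
    rw [h1, h2]
    refine Finset.sum_lt_sum (fun k _ => ?_) ⟨km, Finset.mem_univ km, ?_⟩
    · exact mul_le_mul_of_nonneg_left
        (mul_le_mul_of_nonneg_right (hkM k) (hy k).le) (hT i k).le
    · exact mul_lt_mul_of_pos_left
        (mul_lt_mul_of_pos_right hlt (hy km)) (hT i km)
  have lower : ∀ i, r km * T.mulVec y i < T.mulVec x i := fun i => by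
    have h1 : T.mulVec x i = ∑ k, T i k * (r k * y k) := by
      simp only [Matrix.mulVec, dotProduct]
      exact Finset.sum_congr rfl fun k _ => by rw [← hx_eq k]
    have h2 : r km * T.mulVec y i = ∑ k, T i k * (r km * y k) := by
      simp only [Matrix.mulVec, dotProduct, Finset.mul_sum]
      exact Finset.sum_congr rfl fun k _ => by ring
    rw [h1, h2]
    refine Finset.sum_lt_sum (fun k _ => ?_) ⟨kM, Finset.mem_univ kM, ?_⟩
    · exact mul_le_mul_of_nonneg_left
        (mul_le_mul_of_nonneg_right (hkm k) (hy k).le) (hT i k).le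
    · exact mul_lt_mul_of_pos_left
        (mul_lt_mul_of_pos_right hlt (hy kM)) (hT i kM)
  set g : Fin N → ℝ := fun i => T.mulVec x i / T.mulVec y i with hg
  have hgpos : ∀ i, 0 < g i := fun i => div_pos (by
    have := lower i
    have := mul_pos (hrpos km) (hTy i)
    linarith) (hTy i)
  have hgM : ∀ i, g i < r kM := fun i =>
    (div_lt_iff₀ (hTy i)).mpr (upper i)
  have hgm : ∀ i, r km < g i := fun i =>
    (lt_div_iff₀ (hTy i)).mpr (lower i)
  obtain ⟨iM, hiM⟩ := Finite.exists_max g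
  obtain ⟨im, him⟩ := Finite.exists_min g
  have hgsup : (⨆ i, g i) = g iM :=
    le_antisymm (ciSup_le hiM) (le_ciSup (Set.finite_range g).bddAbove iM)
  have hginf : (⨅ i, g i) = g im :=
    le_antisymm (ciInf_le (Set.finite_range g).bddBelow im) (le_ciInf him)
  unfold hilbertDist
  rw [show (⨆ i, T.mulVec x i / T.mulVec y i) = g iM from hgsup,
      show (⨅ i, T.mulVec x i / T.mulVec y i) = g im from hginf,
      show (⨆ i, x i / y i) = r kM from hM,
      show (⨅ i, x i / y i) = r km from hm]
  have h1 : Real.log (g iM) < Real.log (r kM) := Real.log_lt_log (hgpos iM) (hgM iM)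
  have h2 : Real.log (r km) < Real.log (g im) := Real.log_lt_log (hrpos km) (hgm im)
  linarith
end

section
/- (Perron's theorem) Let N ≥ 2, 𝒩 = {1,...,N}, and let T be an N × N real matrix with T_{ij} > 0 for all i, j ∈ 𝒩. Then there exists a vector x* ∈ ℝ^𝒩 with all entries strictly positive and a real λ > 0 such that Tx* = λ x*, and x* is unique up to positive scalar multiples: if y ∈ ℝ^𝒩 has all entries strictly positive and Ty = μ y for some real μ, then y = c x* for some c > 0. -/
open Filter Topology

section PerronAux

variable {N : ℕ}

/-- A positive matrix applied to a nonneg nonzero vector gives a strictly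
positive vector. -/
lemma perron_mulVec_pos (T : Matrix (Fin N) (Fin N) ℝ) (hT : ∀ i j, 0 < T i j)
    (z : Fin N → ℝ) (hz : ∀ i, 0 ≤ z i) (j : Fin N) (hj : 0 < z j) (i : Fin N) :
    0 < T.mulVec z i := by
  have : T.mulVec z i = ∑ k, T i k * z k := rfl
  rw [this]
  apply Finset.sum_pos' (fun k _ => mul_nonneg (hT i k).le (hz k))
  exact ⟨j, Finset.mem_univ j, mul_pos (hT i j) hj⟩

/-- Comparison lemma: two strictly positive eigenvectors with eigenvalues
`b ≤ a` are proportional. -/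
lemma perron_comparison (hN : 0 < N) (T : Matrix (Fin N) (Fin N) ℝ)
    (hT : ∀ i j, 0 < T i j) (u v : Fin N → ℝ)
    (hu : ∀ i, 0 < u i) (hv : ∀ i, 0 < v i) (a b : ℝ)
    (hTu : T.mulVec u = a • u) (hTv : T.mulVec v = b • v) (hab : b ≤ a) :
    ∃ c : ℝ, 0 < c ∧ v = c • u := by
  haveI : Nonempty (Fin N) := ⟨⟨0, hN⟩⟩
  have hne : (Finset.univ : Finset (Fin N)).Nonempty := Finset.univ_nonempty
  set c : ℝ := Finset.univ.inf' hne (fun i => v i / u i) with hc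
  have hcpos : 0 < c := by
    rw [hc, Finset.lt_inf'_iff]
    exact fun i _ => div_pos (hv i) (hu i)
  obtain ⟨i0, _, hi0⟩ := Finset.exists_mem_eq_inf' hne (fun i => v i / u i)
  have hvi0 : v i0 = c * u i0 := by
    rw [hc.trans hi0, div_mul_cancel₀ _ (hu i0).ne']
  have hle : ∀ i, c * u i ≤ v i := by
    intro i
    have h1 : c ≤ v i / u i :=
      (le_of_eq hc).trans (Finset.inf'_le _ (Finset.mem_univ i))
    exact (le_div_iff₀ (hu i)).mp h1
  refine ⟨c, hcpos, ?_⟩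
  by_contra hne'
  set z : Fin N → ℝ := v - c • u with hz
  have hznn : ∀ i, 0 ≤ z i := fun i => by
    simp only [hz, Pi.sub_apply, Pi.smul_apply, smul_eq_mul, sub_nonneg]
    exact hle i
  have hzne : ∃ j, 0 < z j := by
    by_contra h
    push_neg at h
    apply hne'
    funext i
    have h1 := hznn i
    have h2 := h i
    have : z i = 0 := le_antisymm h2 h1
    simp only [hz, Pi.sub_apply, Pi.smul_apply, smul_eq_mul, sub_eq_zero] at this
    simpa using this
  obtain ⟨j, hj⟩ := hzne
  have hTz : 0 < T.mulVec z i0 := perron_mulVec_pos T hT z hznn j hj i0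
  have : T.mulVec z = b • v - (c * a) • u := by
    rw [hz, Matrix.mulVec_sub, Matrix.mulVec_smul, hTu, hTv, smul_smul]
  rw [this] at hTz
  simp only [Pi.sub_apply, Pi.smul_apply, smul_eq_mul] at hTz
  rw [hvi0] at hTz
  nlinarith [hu i0, mul_nonneg hcpos.le (hu i0).le]

end PerronAux

/-- Perron's theorem: a positive matrix has a strictly positive
eigenvector with positive eigenvalue, unique up to positive scalar multiples
among strictly positive eigenvectors. -/
theorem perron_theorem (N : ℕ) (hN : 2 ≤ N)
    (T : Matrix (Fin N) (Fin N) ℝ) (hT : ∀ i j, 0 < T i j) :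
    ∃ x : Fin N → ℝ, (∀ i, 0 < x i) ∧
      (∃ l : ℝ, 0 < l ∧ T.mulVec x = l • x) ∧
      ∀ y : Fin N → ℝ, (∀ i, 0 < y i) → (∃ m : ℝ, T.mulVec y = m • y) →
        ∃ c : ℝ, 0 < c ∧ y = c • x := by
  have hN0 : 0 < N := by omega
  haveI : Nonempty (Fin N) := ⟨⟨0, hN0⟩⟩
  have hne : (Finset.univ : Finset (Fin N)).Nonempty := Finset.univ_nonempty
  have hneP : (Finset.univ : Finset (Fin N × Fin N)).Nonempty := Finset.univ_nonempty
  -- bounds on entries of T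
  set m : ℝ := Finset.univ.inf' hneP (fun p : Fin N × Fin N => T p.1 p.2) with hm
  set M : ℝ := Finset.univ.sup' hneP (fun p : Fin N × Fin N => T p.1 p.2) with hM
  have hmpos : 0 < m := by
    rw [hm, Finset.lt_inf'_iff]
    exact fun p _ => hT p.1 p.2
  have hmle : ∀ i j, m ≤ T i j := fun i j =>
    Finset.inf'_le (fun p : Fin N × Fin N => T p.1 p.2) (Finset.mem_univ (i, j))
  have hMge : ∀ i j, T i j ≤ M := fun i j =>
    Finset.le_sup' (f := fun p : Fin N × Fin N => T p.1 p.2) (Finset.mem_univ (i, j))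
  have hmM : m ≤ M :=
    le_trans (hmle ⟨0, hN0⟩ ⟨0, hN0⟩) (hMge ⟨0, hN0⟩ ⟨0, hN0⟩)
  have hMpos : 0 < M := lt_of_lt_of_le hmpos hmM
  set δ : ℝ := m / (N * M) with hδ
  have hδpos : 0 < δ := div_pos hmpos (mul_pos (by exact_mod_cast hN0) hMpos)
  -- the compact set K
  set K : Set (Fin N → ℝ) := {x | (∀ i, δ ≤ x i) ∧ ∑ i, x i = 1} with hK
  -- basic facts about elements of K
  have hKpos : ∀ x ∈ K, ∀ i, 0 < x i := fun x hx i => lt_of_lt_of_le hδpos (hx.1 i)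
  -- K is compact
  have hKclosed : IsClosed K := by
    have h1 : IsClosed {x : Fin N → ℝ | ∀ i, δ ≤ x i} := by
      have : {x : Fin N → ℝ | ∀ i, δ ≤ x i} = ⋂ i, {x | δ ≤ x i} := by
        ext x; simp
      rw [this]
      exact isClosed_iInter fun i =>
        isClosed_le continuous_const (continuous_apply i)
    have h2 : IsClosed {x : Fin N → ℝ | ∑ i, x i = 1} :=
      isClosed_eq (by continuity) continuous_const
    exact h1.inter h2
  have hKsub : K ⊆ Set.pi Set.univ (fun _ : Fin N => Set.Icc δ 1) := by
    intro x hx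
    rw [Set.mem_pi]
    intro i _
    refine ⟨hx.1 i, ?_⟩
    have : ∑ j, x j = 1 := hx.2
    have h1 : x i ≤ ∑ j, x j := by
      apply Finset.single_le_sum (f := fun j => x j)
        (fun j _ => le_of_lt (hKpos x hx j)) (Finset.mem_univ i)
    linarith
  have hKcompact : IsCompact K :=
    (isCompact_univ_pi fun _ => isCompact_Icc).of_isClosed_subset hKclosed hKsub
  -- K is nonempty
  have hNpos : (0 : ℝ) < N := by exact_mod_cast hN0
  have hδle : δ ≤ (N : ℝ)⁻¹ := by
    rw [hδ]
    calc m / (↑N * M) ≤ M / (↑N * M) := by gcongr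
      _ = (N : ℝ)⁻¹ := by field_simp [hMpos.ne']
  have hKne : K.Nonempty := by
    refine ⟨fun _ => (N : ℝ)⁻¹, fun i => hδle, ?_⟩
    simp [Finset.sum_const, Finset.card_univ]
    field_simp
  -- the Collatz–Wielandt function
  set f : (Fin N → ℝ) → ℝ :=
    fun x => Finset.univ.inf' hne (fun i => T.mulVec x i / x i) with hf
  have hfcont : ContinuousOn f K := by
    apply ContinuousOn.finset_inf'_apply hne
    intro i _
    apply ContinuousOn.div
    · exact (Continuous.continuousOn (by
        have : Continuous fun x : Fin N → ℝ => T.mulVec x i := by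
          have : (fun x : Fin N → ℝ => T.mulVec x i)
              = fun x => ∑ k, T i k * x k := rfl
          rw [this]
          exact continuous_finset_sum _ fun k _ =>
            (continuous_const.mul (continuous_apply k))
        exact this))
    · exact (continuous_apply i).continuousOn
    · exact fun x hx => ne_of_gt (hKpos x hx i)
  -- max of f on K
  obtain ⟨x, hxK, hxmax⟩ := hKcompact.exists_isMaxOn hKne hfcont
  set r : ℝ := f x with hr
  have hxpos : ∀ i, 0 < x i := hKpos x hxK
  have hrle : ∀ i, r * x i ≤ T.mulVec x i := by
    intro i
    have h1 : r ≤ T.mulVec x i / x i :=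
      (le_of_eq hr).trans (Finset.inf'_le _ (Finset.mem_univ i))
    exact (le_div_iff₀ (hxpos i)).mp h1
  have hxnn : ∀ k, 0 ≤ x k := fun k => (hxpos k).le
  have hrpos : 0 < r := by
    have h2 : 0 < Finset.univ.inf' hne (fun i => T.mulVec x i / x i) := by
      rw [Finset.lt_inf'_iff]
      intro i _
      exact div_pos (perron_mulVec_pos T hT x hxnn ⟨0, hN0⟩ (hxpos _) i) (hxpos i)
    exact h2
  -- the maximizer is an eigenvector
  have heig : T.mulVec x = r • x := by
    by_contra hne2
    set w : Fin N → ℝ := T.mulVec x with hwdef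
    set z : Fin N → ℝ := w - r • x with hzdef
    have hznn : ∀ i, 0 ≤ z i := by
      intro i
      simp only [hzdef, Pi.sub_apply, Pi.smul_apply, smul_eq_mul, sub_nonneg]
      exact hrle i
    have hzex : ∃ j, 0 < z j := by
      by_contra h
      push_neg at h
      apply hne2
      funext i
      have h3 : z i = 0 := le_antisymm (h i) (hznn i)
      simp only [hzdef, Pi.sub_apply, Pi.smul_apply, smul_eq_mul,
        sub_eq_zero] at h3
      simpa using h3
    obtain ⟨j, hj⟩ := hzex
    have hTzpos : ∀ i, 0 < T.mulVec z i := fun i =>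
      perron_mulVec_pos T hT z hznn j hj i
    have hwpos : ∀ i, 0 < w i :=
      perron_mulVec_pos T hT x hxnn ⟨0, hN0⟩ (hxpos _)
    have hTz : T.mulVec z = T.mulVec w - r • w := by
      rw [hzdef, Matrix.mulVec_sub, Matrix.mulVec_smul, hwdef]
    have hstrict : ∀ i, r * w i < T.mulVec w i := by
      intro i
      have := hTzpos i
      rw [hTz] at this
      simp only [Pi.sub_apply, Pi.smul_apply, smul_eq_mul] at this
      linarith
    set s : ℝ := ∑ i, w i with hs
    have hspos : 0 < s :=
      Finset.sum_pos (fun i _ => hwpos i) hne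
    have hwm : ∀ i, m ≤ w i := by
      intro i
      have h4 : ∑ k, m * x k ≤ ∑ k, T i k * x k :=
        Finset.sum_le_sum fun k _ =>
          mul_le_mul_of_nonneg_right (hmle i k) (hxnn k)
      have h5 : ∑ k, m * x k = m := by
        rw [← Finset.mul_sum, hxK.2, mul_one]
      have h6 : w i = ∑ k, T i k * x k := rfl
      rw [h6]; linarith
    have hwM : ∀ i, w i ≤ M := by
      intro i
      have h4 : ∑ k, T i k * x k ≤ ∑ k, M * x k :=
        Finset.sum_le_sum fun k _ =>
          mul_le_mul_of_nonneg_right (hMge i k) (hxnn k)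
      have h5 : ∑ k, M * x k = M := by
        rw [← Finset.mul_sum, hxK.2, mul_one]
      have h6 : w i = ∑ k, T i k * x k := rfl
      rw [h6]; linarith
    have hsle : s ≤ N * M := by
      rw [hs]
      calc ∑ i, w i ≤ ∑ _i : Fin N, M := Finset.sum_le_sum fun i _ => hwM i
        _ = N * M := by simp [Finset.sum_const, Finset.card_univ, nsmul_eq_mul]
    set w' : Fin N → ℝ := s⁻¹ • w with hw'def
    have hw'eq : ∀ i, w' i = w i / s := by
      intro i
      simp [hw'def, div_eq_inv_mul]
    have hw'K : w' ∈ K := by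
      constructor
      · intro i
        rw [hw'eq i, hδ]
        exact div_le_div₀ (hwpos i).le (hwm i) hspos hsle
      · have : ∑ i, w' i = s⁻¹ * ∑ i, w i := by
          simp [hw'def, Finset.mul_sum]
        rw [this, ← hs, inv_mul_cancel₀ hspos.ne']
    have hratio : ∀ i, T.mulVec w' i / w' i = T.mulVec w i / w i := by
      intro i
      have h7 : T.mulVec w' = s⁻¹ • T.mulVec w := by
        rw [hw'def, Matrix.mulVec_smul]
      rw [h7]
      show s⁻¹ * T.mulVec w i / (s⁻¹ * w i) = _
      rw [mul_div_mul_left _ _ (inv_ne_zero hspos.ne')]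
    have hkey : r < f w' := by
      rw [hf]
      simp only []
      rw [Finset.lt_inf'_iff]
      intro i _
      rw [hratio i]
      rw [lt_div_iff₀ (hwpos i)]
      exact hstrict i
    have := hxmax hw'K
    rw [← hr] at this
    exact absurd this (not_le.mpr hkey)
  refine ⟨x, hxpos, ⟨r, hrpos, heig⟩, ?_⟩
  rintro y hy ⟨μ, hTy⟩
  rcases le_total μ r with h | h
  · exact perron_comparison hN0 T hT x y hxpos hy r μ heig hTy h
  · obtain ⟨c, hc, hxy⟩ := perron_comparison hN0 T hT y x hy hxpos μ r hTy heig h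
    refine ⟨c⁻¹, inv_pos.mpr hc, ?_⟩
    rw [hxy, smul_smul, inv_mul_cancel₀ hc.ne', one_smul]
end
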